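/- arXiv:2008.02845 — 5 statements merged into one kernel-verified Lean document; each statement's English description precedes it below -/
import Mathlib

section
/- Let R be a commutative ring and let C be a radical divisible conservative system of R. Then for any two subsets T and S of R, the C-ideal C-generated by the set of products T·S = {ts : t ∈ T, s ∈ S} equals the intersection of the C-ideal C-generated by T and the C-ideal C-generated by S, i.e. (T·S)_C = (T)_C ∩ (S)_C. -/
/-- The division ideal `I : s = {r ∈ R | r * s ∈ I}`. -/
def idealDiv {R : Type*} [CommRing R] (I : Ideal R) (s : R) : Ideal R where
  carrier := {r : R | r * s ∈ I}
  zero_mem' := by simp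
  add_mem' := by
    intro a b ha hb
    simpa [add_mul] using I.add_mem ha hb
  smul_mem' := by
    intro c a ha
    simp only [Set.mem_setOf_eq, smul_eq_mul] at *
    rw [mul_assoc]
    exact I.mul_mem_left c ha

/-- A conservative system of ideals of a commutative ring: a collection of ideals closed
under intersections of arbitrary subfamilies (the empty intersection being `⊤ = R`) and
under unions (suprema) of nonempty chains. -/
structure ConservativeSystem (R : Type*) [CommRing R] where
  carrier : Set (Ideal R)
  sInf_mem : ∀ S : Set (Ideal R), S ⊆ carrier → sInf S ∈ carrier
  chain_sSup_mem : ∀ S : Set (Ideal R), S ⊆ carrier → S.Nonempty →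
    IsChain (· ≤ ·) S → sSup S ∈ carrier

variable {R : Type*} [CommRing R]

/-- The `C`-ideal `C`-generated by a subset `A ⊆ R`: the intersection of all `C`-ideals
containing `A`. -/
def ConservativeSystem.gen (C : ConservativeSystem R) (A : Set R) : Ideal R :=
  sInf {I : Ideal R | I ∈ C.carrier ∧ A ⊆ (I : Set R)}

/-- A conservative system is radical if all of its members are radical ideals. -/
def ConservativeSystem.IsRadicalSystem (C : ConservativeSystem R) : Prop :=
  ∀ I ∈ C.carrier, I.IsRadical

/-- A conservative system is divisible if it is closed under division of ideals by elements. -/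
def ConservativeSystem.IsDivisible (C : ConservativeSystem R) : Prop :=
  ∀ I ∈ C.carrier, ∀ s : R, idealDiv I s ∈ C.carrier

/-- A conservative system is noetherian if every ascending chain of `C`-ideals stabilizes. -/
def ConservativeSystem.IsNoetherianSystem (C : ConservativeSystem R) : Prop :=
  ∀ f : ℕ → Ideal R, (∀ n, f n ∈ C.carrier) → Monotone f → ∃ N, ∀ n, N ≤ n → f n = f N

/-- A `C`-ideal is finitely `C`-generated if it is `C`-generated by a finite set. -/
def ConservativeSystem.FinitelyGen (C : ConservativeSystem R) (I : Ideal R) : Prop :=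
  ∃ Fs : Finset R, I = C.gen (↑Fs : Set R)

lemma ConservativeSystem.gen_mem (C : ConservativeSystem R) (A : Set R) :
    C.gen A ∈ C.carrier :=
  C.sInf_mem _ (fun _ hI => hI.1)

lemma ConservativeSystem.subset_gen (C : ConservativeSystem R) (A : Set R) :
    A ⊆ (C.gen A : Set R) := fun x hx =>
  Submodule.mem_sInf.mpr fun _ hI => hI.2 hx

lemma ConservativeSystem.gen_le (C : ConservativeSystem R) {A : Set R} {I : Ideal R}
    (hI : I ∈ C.carrier) (hA : A ⊆ (I : Set R)) : C.gen A ≤ I :=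
  sInf_le ⟨hI, hA⟩

/-- If `C` is a radical divisible conservative system of a commutative ring
`R`, then for any subsets `T, S ⊆ R` one has `(T·S)_C = (T)_C ⊓ (S)_C`. -/
theorem gen_image2_mul_eq_inf (C : ConservativeSystem R)
    (hrad : C.IsRadicalSystem) (hdiv : C.IsDivisible) (T S : Set R) :
    C.gen (Set.image2 (· * ·) T S) = C.gen T ⊓ C.gen S := by
  apply le_antisymm
  · refine le_inf ?_ ?_
    · refine C.gen_le (C.gen_mem T) ?_
      rintro x ⟨t, ht, s, hs, rfl⟩
      exact (C.gen T).mul_mem_right s (C.subset_gen T ht)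
    · refine C.gen_le (C.gen_mem S) ?_
      rintro x ⟨t, ht, s, hs, rfl⟩
      exact (C.gen S).mul_mem_left t (C.subset_gen S hs)
  · set I := C.gen (Set.image2 (· * ·) T S) with hIdef
    have hImem : I ∈ C.carrier := C.gen_mem _
    -- step 1: for t ∈ T, x ∈ gen S, x * t ∈ I
    have h1 : ∀ x ∈ C.gen S, ∀ t ∈ T, x * t ∈ I := by
      intro x hx t ht
      have : C.gen S ≤ idealDiv I t := by
        refine C.gen_le (hdiv I hImem t) ?_
        intro s hs
        show s * t ∈ I
        have : t * s ∈ I := C.subset_gen _ ⟨t, ht, s, hs, rfl⟩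
        rwa [mul_comm]
      exact this hx
    have h2 : ∀ x ∈ C.gen S, ∀ y ∈ C.gen T, y * x ∈ I := by
      intro x hx y hy
      have : C.gen T ≤ idealDiv I x := by
        refine C.gen_le (hdiv I hImem x) ?_
        intro t ht
        show t * x ∈ I
        rw [mul_comm]
        exact h1 x hx t ht
      exact this hy
    intro z hz
    have hz2 : z * z ∈ I := h2 z hz.2 z hz.1
    have := hrad I hImem
    exact this ⟨2, by rwa [pow_two]⟩
end

section
/- Let R be a commutative ring and let C be a radical divisible conservative system of R. If C is not noetherian, then the set of C-ideals that are not finitely C-generated has a maximal element with respect to inclusion, and every C-ideal that is maximal among the C-ideals that are not finitely C-generated is a prime ideal. -/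
variable {R : Type*} [CommRing R]

namespace ConservativeSystem

theorem gen_mem_s1 (C : ConservativeSystem R) (A : Set R) : C.gen A ∈ C.carrier :=
  C.sInf_mem _ fun _ hI => hI.1

theorem subset_gen_s1 (C : ConservativeSystem R) (A : Set R) : A ⊆ ↑(C.gen A) := fun _ hx =>
  Submodule.mem_sInf.2 fun _ hI => hI.2 hx

theorem gen_le_s1 (C : ConservativeSystem R) {A : Set R} {I : Ideal R} (hI : I ∈ C.carrier)
    (hA : A ⊆ ↑I) : C.gen A ≤ I :=
  sInf_le ⟨hI, hA⟩

theorem finitelyGen_top (C : ConservativeSystem R) : C.FinitelyGen ⊤ := by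
  refine ⟨{1}, le_antisymm ?_ le_top⟩
  intro x _
  refine Submodule.mem_sInf.2 fun I hI => ?_
  have h1 : (1 : R) ∈ I := hI.2 (by simp)
  simpa using Ideal.mul_mem_left I x h1

/-- A finite set contained in the sup of a nonempty chain of ideals is contained in a
member of the chain. -/
theorem exists_mem_of_finset_subset_sSup {S : Set (Ideal R)} (hS : S.Nonempty)
    (hch : IsChain (· ≤ ·) S) (Fs : Finset R) (h : (↑Fs : Set R) ⊆ ↑(sSup S)) :
    ∃ J ∈ S, (↑Fs : Set R) ⊆ ↑J := by
  classical
  induction Fs using Finset.induction_on with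
  | empty => exact ⟨hS.choose, hS.choose_spec, by simp⟩
  | @insert a Fs _ ih =>
    obtain ⟨J₂, hJ₂S, hJ₂⟩ := ih fun x hx => h (by simp [hx])
    have ha : a ∈ sSup S := h (by simp)
    obtain ⟨J₁, hJ₁S, haJ₁⟩ := (Submodule.mem_sSup_of_directed hS hch.directedOn).1 ha
    rcases hch.total hJ₁S hJ₂S with h12 | h21
    · exact ⟨J₂, hJ₂S, by
        intro x hx
        rcases Finset.mem_insert.1 (by exact_mod_cast hx) with rfl | hx'
        · exact h12 haJ₁
        · exact hJ₂ hx'⟩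
    · exact ⟨J₁, hJ₁S, by
        intro x hx
        rcases Finset.mem_insert.1 (by exact_mod_cast hx) with rfl | hx'
        · exact haJ₁
        · exact h21 (hJ₂ hx')⟩

/-- The sup of a nonempty chain of non-finitely-generated `C`-ideals is not finitely
`C`-generated. -/
theorem not_finitelyGen_sSup (C : ConservativeSystem R) {S : Set (Ideal R)}
    (hSc : S ⊆ C.carrier) (hS : S.Nonempty) (hch : IsChain (· ≤ ·) S)
    (hfg : ∀ J ∈ S, ¬ C.FinitelyGen J) : ¬ C.FinitelyGen (sSup S) := by
  rintro ⟨Fs, hFs⟩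
  have hsub : (↑Fs : Set R) ⊆ ↑(sSup S) := by
    rw [hFs]; exact C.subset_gen_s1 _
  obtain ⟨J, hJS, hJ⟩ := exists_mem_of_finset_subset_sSup hS hch Fs hsub
  have h1 : C.gen ↑Fs ≤ J := C.gen_le_s1 (hSc hJS) hJ
  have h2 : J ≤ C.gen ↑Fs := hFs ▸ le_sSup hJS
  exact hfg J hJS ⟨Fs, le_antisymm h2 h1⟩

end ConservativeSystem

/-- If a radical divisible conservative system `C` of a commutative ring `R`
is not noetherian, then there is a maximal element (w.r.t. inclusion) among the `C`-ideals that
are not finitely `C`-generated; moreover any `C`-ideal maximal among those not finitely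
`C`-generated is prime. -/
theorem exists_maximal_not_finitelyGen_and_maximal_isPrime (C : ConservativeSystem R)
    (hrad : C.IsRadicalSystem) (hdiv : C.IsDivisible)
    (hnotnoeth : ¬ C.IsNoetherianSystem) :
    (∃ M ∈ C.carrier, ¬ C.FinitelyGen M ∧
        ∀ J ∈ C.carrier, ¬ C.FinitelyGen J → M ≤ J → J = M) ∧
    (∀ M ∈ C.carrier, ¬ C.FinitelyGen M →
        (∀ J ∈ C.carrier, ¬ C.FinitelyGen J → M ≤ J → J = M) → M.IsPrime) := by
  classical
  have hSne : {I : Ideal R | I ∈ C.carrier ∧ ¬ C.FinitelyGen I}.Nonempty := by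
    by_contra h
    apply hnotnoeth
    intro f hf hmono
    have hall : ∀ I ∈ C.carrier, C.FinitelyGen I := by
      intro I hI
      by_contra hI'
      exact h ⟨I, hI, hI'⟩
    have hchain : IsChain (· ≤ ·) (Set.range f) := by
      rintro _ ⟨m, rfl⟩ _ ⟨n, rfl⟩ _
      rcases le_total m n with h' | h'
      · exact Or.inl (hmono h')
      · exact Or.inr (hmono h')
    have hrc : Set.range f ⊆ C.carrier := by rintro _ ⟨n, rfl⟩; exact hf n
    have hLmem : sSup (Set.range f) ∈ C.carrier :=
      C.chain_sSup_mem _ hrc (Set.range_nonempty f) hchain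
    obtain ⟨Fs, hFs⟩ := hall _ hLmem
    obtain ⟨J, hJS, hJ⟩ := ConservativeSystem.exists_mem_of_finset_subset_sSup
      (Set.range_nonempty f) hchain Fs (by rw [hFs]; exact C.subset_gen_s1 _)
    obtain ⟨N, rfl⟩ := hJS
    refine ⟨N, fun n hn => le_antisymm ?_ (hmono hn)⟩
    calc f n ≤ sSup (Set.range f) := le_sSup ⟨n, rfl⟩
      _ = C.gen ↑Fs := hFs
      _ ≤ f N := C.gen_le_s1 (hf N) hJ
  constructor
  · -- existence of a maximal element, by Zorn
    obtain ⟨x, hx⟩ := hSne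
    obtain ⟨M, _, hM⟩ := zorn_le_nonempty₀
      {I : Ideal R | I ∈ C.carrier ∧ ¬ C.FinitelyGen I} (fun c hcS hc y hyc => by
        refine ⟨sSup c, ⟨C.chain_sSup_mem c (fun z hz => (hcS hz).1) ⟨y, hyc⟩ hc,
          C.not_finitelyGen_sSup (fun z hz => (hcS hz).1) ⟨y, hyc⟩ hc
            (fun z hz => (hcS hz).2)⟩, fun z hz => le_sSup hz⟩) x hx
    exact ⟨M, hM.prop.1, hM.prop.2, fun J hJc hJfg hMJ =>
      le_antisymm (hM.2 ⟨hJc, hJfg⟩ hMJ) hMJ⟩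
  · -- maximal elements are prime
    intro M hMc hMfg hMmax
    have hfgabove : ∀ J ∈ C.carrier, M ≤ J → J ≠ M → C.FinitelyGen J := by
      intro J hJ hMJ hne
      by_contra h
      exact hne (hMmax J hJ h hMJ)
    have hne_top : M ≠ ⊤ := fun h => hMfg (h ▸ C.finitelyGen_top)
    refine ⟨hne_top, ?_⟩
    intro a b hab
    by_contra hcon
    push_neg at hcon
    obtain ⟨ha, hb⟩ := hcon
    -- the ideal A generated by M and a
    set A := C.gen (↑M ∪ {a}) with hAdef
    have hAc : A ∈ C.carrier := C.gen_mem_s1 _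
    have hMA : M ≤ A := fun x hx => C.subset_gen_s1 _ (Or.inl hx)
    have haA : a ∈ A := C.subset_gen_s1 _ (Or.inr rfl)
    have hAne : A ≠ M := fun h => ha (h ▸ haA)
    obtain ⟨Fs, hFs⟩ := hfgabove A hAc hMA hAne
    -- the ideal B = M : a
    set B := idealDiv M a with hBdef
    have hBc : B ∈ C.carrier := hdiv M hMc a
    have hMB : M ≤ B := fun x hx => M.mul_mem_right a hx
    have hbB : b ∈ B := by show b * a ∈ M; rwa [mul_comm]
    have hBne : B ≠ M := fun h => hb (h ▸ hbB)
    obtain ⟨Gs, hGs⟩ := hfgabove B hBc hMB hBne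
    -- A ⊓ B = M, using radicality
    have hAB : ∀ x, x ∈ A → x ∈ B → x ∈ M := by
      intro x hxA hxB
      have hMx : idealDiv M x ∈ C.carrier := hdiv M hMc x
      have hAle : A ≤ idealDiv M x := by
        refine C.gen_le_s1 hMx ?_
        rintro y (hy | hy)
        · exact M.mul_mem_right x hy
        · have hya : y = a := hy
          show y * x ∈ M
          rw [hya, mul_comm]; exact hxB
      have hx2 : x * x ∈ M := hAle hxA
      exact hrad M hMc ⟨2, by rwa [sq]⟩
    -- the finite product set
    set P : Finset R := (Fs ×ˢ Gs).image (fun p => p.1 * p.2) with hPdef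
    set K := C.gen (↑P : Set R) with hKdef
    have hKc : K ∈ C.carrier := C.gen_mem_s1 _
    have hPK : ∀ f ∈ Fs, ∀ g ∈ Gs, f * g ∈ K := by
      intro f hf g hg
      refine C.subset_gen_s1 _ ?_
      refine Finset.mem_coe.2 (Finset.mem_image.2 ⟨(f, g), ?_, rfl⟩)
      exact Finset.mem_product.2 ⟨hf, hg⟩
    have hKM : K ≤ M := by
      refine C.gen_le_s1 hMc ?_
      intro y hy
      obtain ⟨⟨f, g⟩, hfg, rfl⟩ := Finset.mem_image.1 (Finset.mem_coe.1 hy)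
      obtain ⟨hf, hg⟩ := Finset.mem_product.1 hfg
      have hfA : f ∈ A := by rw [hFs]; exact C.subset_gen_s1 _ (Finset.mem_coe.2 hf)
      have hgB : g ∈ B := by rw [hGs]; exact C.subset_gen_s1 _ (Finset.mem_coe.2 hg)
      exact hAB _ (A.mul_mem_right g hfA) (B.mul_mem_left f hgB)
    have hMK : M ≤ K := by
      intro x hxM
      have hxA : x ∈ C.gen ↑Fs := by rw [← hFs]; exact hMA hxM
      have hxB : x ∈ C.gen ↑Gs := by rw [← hGs]; exact hMB hxM
      have hstep : ∀ g ∈ Gs, x * g ∈ K := by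
        intro g hg
        have h1 : C.gen ↑Fs ≤ idealDiv K g :=
          C.gen_le_s1 (hdiv K hKc g) (fun f hf => hPK f (Finset.mem_coe.1 hf) g hg)
        exact h1 hxA
      have h2 : C.gen ↑Gs ≤ idealDiv K x := by
        refine C.gen_le_s1 (hdiv K hKc x) ?_
        intro g hg
        show g * x ∈ K
        rw [mul_comm]; exact hstep g (Finset.mem_coe.1 hg)
      have hx2 : x * x ∈ K := h2 hxB
      exact hrad K hKc ⟨2, by rwa [sq]⟩
    exact hMfg ⟨P, hKdef ▸ (le_antisymm hKM hMK).symm⟩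
end

section
/- Let k be a field of characteristic zero and let A = k[x₁, x₂, x₃, …, y] be the polynomial algebra in countably many variables x_i (i ≥ 1) and an additional variable y, equipped with a bracket {-,-} : A × A → A that is k-bilinear, antisymmetric, satisfies the Jacobi identity, is a derivation in each argument, and satisfies {x_i, x_j} = 0 and {y, x_i} = x_{i+1} for all i, j ≥ 1 (this is the symmetric algebra of the Lie algebra D with basis x₁, x₂, …, y and these brackets). Then the chain of Poisson ideals [x₁²] ⊆ [x₁², x₂²] ⊆ [x₁², x₂², x₃²] ⊆ ⋯, where [S] denotes the smallest Poisson ideal of A containing S, is strictly increasing; in particular A does not satisfy the ACC on Poisson ideals. -/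
/-!
The chain is separated by algebra homomorphisms into a small commutative algebra. For a
bilinear form `β` on `V`, let `E = k ⊕ V ⊕ k`, where two vectors multiply into the last summand
via `β u v + β v u`. On `V = k[t]` take `β_N f g = coeff_N (f(t) g(-t))`; multiplication by `t`
is skew for `β_N`, hence induces a derivation `d` of `E`. Sending `y ↦ T` and `xᵢ ↦ tⁱ ∈ V` gives
`φ : A → E[T]` intertwining `{y, -}` with `d` applied to coefficients and `{xⱼ, -}` with
`-φ(x_{j+1}) ∂_T`, so `ker φ` is a Poisson ideal. As `φ(xᵢ²)` is `2 β_N(tⁱ, tⁱ) = 2 (-1)ⁱ [N = 2i]`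
in the last summand, for `N = 2(n + 1)` the kernel contains `x₁², …, xₙ²` but not `x_{n+1}²`.
-/

/-- `B` is a Poisson bracket on the commutative `k`-algebra `A`: it is `k`-bilinear
(additivity and `k`-homogeneity in the first argument, together with antisymmetry, give
bilinearity), antisymmetric, satisfies the Jacobi identity, and is a derivation in each
argument. -/
def IsPoissonBracket (k : Type*) {A : Type*} [CommRing k] [CommRing A] [Algebra k A]
    (B : A → A → A) : Prop :=
  (∀ a b c : A, B (a + b) c = B a c + B b c) ∧
  (∀ (r : k) (a b : A), B (r • a) b = r • B a b) ∧
  (∀ a b : A, B a b = - B b a) ∧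
  (∀ a b c : A, B a (B b c) + B b (B c a) + B c (B a b) = 0) ∧
  (∀ a b c : A, B a (b * c) = B a b * c + b * B a c)

/-- An ideal `I` is a Poisson ideal for the bracket `B` if `{A, I} ⊆ I`. -/
def IsPoissonIdeal {A : Type*} [CommRing A] (B : A → A → A) (I : Ideal A) : Prop :=
  ∀ x : A, ∀ y ∈ I, B x y ∈ I

/-- `A` satisfies the ascending chain condition on radical Poisson ideals. -/
def PoissonRadicalACC {A : Type*} [CommRing A] (B : A → A → A) : Prop :=
  ∀ c : ℕ → Ideal A, (∀ n, IsPoissonIdeal B (c n)) → (∀ n, (c n).IsRadical) →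
    Monotone c → ∃ N, ∀ n, N ≤ n → c n = c N

/-- `A` satisfies the ascending chain condition on (arbitrary) Poisson ideals. -/
def PoissonACC {A : Type*} [CommRing A] (B : A → A → A) : Prop :=
  ∀ c : ℕ → Ideal A, (∀ n, IsPoissonIdeal B (c n)) → Monotone c →
    ∃ N, ∀ n, N ≤ n → c n = c N

/-- The smallest Poisson ideal containing a subset `S` of `A`. -/
def poissonGen {A : Type*} [CommRing A] (B : A → A → A) (S : Set A) : Ideal A :=
  sInf {I : Ideal A | IsPoissonIdeal B I ∧ S ⊆ (I : Set A)}

namespace IsPoissonBracket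

variable {k A : Type*} [CommRing k] [CommRing A] [Algebra k A] {B : A → A → A}

lemma add_right (hB : IsPoissonBracket k B) (a b c : A) : B a (b + c) = B a b + B a c := by
  obtain ⟨hadd, -, hanti, -, -⟩ := hB
  rw [hanti, hadd, neg_add, ← hanti, ← hanti]

lemma mul_left (hB : IsPoissonBracket k B) (a b c : A) : B (a * b) c = a * B b c + b * B a c := by
  obtain ⟨-, -, hanti, -, hleib⟩ := hB
  rw [hanti, hleib, hanti c a, hanti c b]
  ring

lemma algebraMap_right (hB : IsPoissonBracket k B) (a : A) (r : k) :
    B a (algebraMap k A r) = 0 := by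
  obtain ⟨-, hsmul, hanti, -, hleib⟩ := hB
  have hone : B a 1 = 0 := by simpa using hleib a 1 1
  rw [Algebra.algebraMap_eq_smul_one, hanti, hsmul, hanti, hone, neg_zero, smul_zero, neg_zero]

lemma algebraMap_left (hB : IsPoissonBracket k B) (r : k) (a : A) :
    B (algebraMap k A r) a = 0 := by
  rw [hB.2.2.1, hB.algebraMap_right, neg_zero]

lemma self_eq_zero [NoZeroDivisors A] [CharZero A] (hB : IsPoissonBracket k B) (a : A) :
    B a a = 0 :=
  CharZero.eq_neg_self_iff.mp (hB.2.2.1 a a)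

end IsPoissonBracket

section PoissonGen

variable {A : Type*} [CommRing A] (B : A → A → A)

lemma isPoissonIdeal_poissonGen (S : Set A) : IsPoissonIdeal B (poissonGen B S) := by
  intro x y hy
  rw [poissonGen, Submodule.mem_sInf] at hy ⊢
  exact fun I hI => hI.1 x y (hy I hI)

lemma subset_poissonGen (S : Set A) : S ⊆ poissonGen B S :=
  fun _ hx => Submodule.mem_sInf.mpr fun _ hI => hI.2 hx

lemma poissonGen_mono {S T : Set A} (h : S ⊆ T) : poissonGen B S ≤ poissonGen B T :=
  sInf_le_sInf fun _ hI => ⟨hI.1, h.trans hI.2⟩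

lemma poissonGen_le {S : Set A} {I : Ideal A} (hI : IsPoissonIdeal B I) (hS : S ⊆ I) :
    poissonGen B S ≤ I :=
  sInf_le ⟨hI, hS⟩

lemma poissonGen_lt_of_notMem {S T : Set A} (hST : S ⊆ T) {I : Ideal A}
    (hI : IsPoissonIdeal B I) (hS : S ⊆ I) {a : A} (haT : a ∈ T) (haI : a ∉ I) :
    poissonGen B S < poissonGen B T :=
  (poissonGen_mono B hST).lt_of_ne fun h =>
    haI (poissonGen_le B hI hS (h ▸ subset_poissonGen B T haT))

lemma not_poissonACC_of_strictMono {c : ℕ → Ideal A} (hc : ∀ n, IsPoissonIdeal B (c n))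
    (hmono : StrictMono c) : ¬ PoissonACC B := fun hacc =>
  let ⟨N, hN⟩ := hacc c hc hmono.monotone
  (hmono (Nat.lt_succ_self N)).ne' (hN (N + 1) N.le_succ)

end PoissonGen

section Kernel

open MvPolynomial

variable {σ k R : Type*} [CommRing k] [CommRing R] [Algebra k R]
  {B : MvPolynomial σ k → MvPolynomial σ k → MvPolynomial σ k}

lemma map_bracket_X_eq_derivation (hB : IsPoissonBracket k B) (φ : MvPolynomial σ k →ₐ[k] R)
    (D : Derivation k R R) (i : σ) (h : ∀ j, φ (B (X i) (X j)) = D (φ (X j)))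
    (f : MvPolynomial σ k) : φ (B (X i) f) = D (φ f) := by
  induction f using MvPolynomial.induction_on with
  | C r => rw [← algebraMap_eq, hB.algebraMap_right, AlgHom.commutes, map_zero,
      D.map_algebraMap]
  | add p q hp hq => rw [hB.add_right, map_add, hp, hq, map_add, map_add]
  | mul_X p j hp =>
    rw [hB.2.2.2.2 (X i) p (X j), map_add, map_mul, map_mul, hp, h, map_mul, D.leibniz,
      smul_eq_mul, smul_eq_mul]
    ring

lemma isPoissonIdeal_ker (hB : IsPoissonBracket k B) (φ : MvPolynomial σ k →ₐ[k] R)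
    (D : σ → Derivation k R R) (h : ∀ i j, φ (B (X i) (X j)) = D i (φ (X j))) :
    IsPoissonIdeal B (RingHom.ker φ) := by
  intro p f hf
  rw [RingHom.mem_ker] at hf
  induction p using MvPolynomial.induction_on with
  | C r => rw [← algebraMap_eq, hB.algebraMap_left]; exact zero_mem _
  | add p q hp hq => rw [hB.1]; exact add_mem hp hq
  | mul_X p i hp =>
    have hi : φ (B (X i) f) = 0 := by
      rw [map_bracket_X_eq_derivation hB φ (D i) i (h i), hf, map_zero]
    rw [hB.mul_left]
    exact add_mem (Ideal.mul_mem_left _ p hi) (Ideal.mul_mem_left _ _ hp)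

end Kernel

@[ext]
structure PairingAlgebra {k V : Type*} [CommRing k] [AddCommGroup V] [Module k V]
    (β : LinearMap.BilinForm k V) where
  base : k
  vec : V
  top : k

namespace PairingAlgebra

variable {k V : Type*} [CommRing k] [AddCommGroup V] [Module k V] {β : LinearMap.BilinForm k V}

instance : Zero (PairingAlgebra β) := ⟨⟨0, 0, 0⟩⟩
instance : One (PairingAlgebra β) := ⟨⟨1, 0, 0⟩⟩
instance : Add (PairingAlgebra β) := ⟨fun x y => ⟨x.base + y.base, x.vec + y.vec, x.top + y.top⟩⟩
instance : Neg (PairingAlgebra β) := ⟨fun x => ⟨-x.base, -x.vec, -x.top⟩⟩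
instance : Sub (PairingAlgebra β) := ⟨fun x y => ⟨x.base - y.base, x.vec - y.vec, x.top - y.top⟩⟩
instance : SMul ℕ (PairingAlgebra β) := ⟨fun n x => ⟨n • x.base, n • x.vec, n • x.top⟩⟩
instance : SMul ℤ (PairingAlgebra β) := ⟨fun n x => ⟨n • x.base, n • x.vec, n • x.top⟩⟩
instance : Mul (PairingAlgebra β) :=
  ⟨fun x y => ⟨x.base * y.base, x.base • y.vec + y.base • x.vec,
    x.base * y.top + y.base * x.top + β x.vec y.vec + β y.vec x.vec⟩⟩

@[simp] lemma base_zero : (0 : PairingAlgebra β).base = 0 := rfl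
@[simp] lemma vec_zero : (0 : PairingAlgebra β).vec = 0 := rfl
@[simp] lemma top_zero : (0 : PairingAlgebra β).top = 0 := rfl
@[simp] lemma base_one : (1 : PairingAlgebra β).base = 1 := rfl
@[simp] lemma vec_one : (1 : PairingAlgebra β).vec = 0 := rfl
@[simp] lemma top_one : (1 : PairingAlgebra β).top = 0 := rfl
@[simp] lemma base_add (x y : PairingAlgebra β) : (x + y).base = x.base + y.base := rfl
@[simp] lemma vec_add (x y : PairingAlgebra β) : (x + y).vec = x.vec + y.vec := rfl
@[simp] lemma top_add (x y : PairingAlgebra β) : (x + y).top = x.top + y.top := rfl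
@[simp] lemma base_mul (x y : PairingAlgebra β) : (x * y).base = x.base * y.base := rfl
@[simp] lemma vec_mul (x y : PairingAlgebra β) : (x * y).vec = x.base • y.vec + y.base • x.vec :=
  rfl
@[simp] lemma top_mul (x y : PairingAlgebra β) :
    (x * y).top = x.base * y.top + y.base * x.top + β x.vec y.vec + β y.vec x.vec := rfl

def equivProd : PairingAlgebra β ≃ k × V × k where
  toFun x := (x.base, x.vec, x.top)
  invFun p := ⟨p.1, p.2.1, p.2.2⟩

instance : AddCommGroup (PairingAlgebra β) :=
  equivProd.injective.addCommGroup _ rfl (fun _ _ => rfl) (fun _ => rfl) (fun _ _ => rfl)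
    (fun _ _ => rfl) (fun _ _ => rfl)

instance : CommRing (PairingAlgebra β) where
  mul_assoc x y z := by
    ext
    · simp [mul_assoc]
    · simp [smul_add, smul_smul]; module
    · simp; ring
  mul_comm x y := by
    ext
    · simp [mul_comm]
    · simp [add_comm]
    · simp; ring
  one_mul x := by ext <;> simp
  mul_one x := by ext <;> simp
  zero_mul x := by ext <;> simp
  mul_zero x := by ext <;> simp
  left_distrib x y z := by
    ext
    · simp [mul_add]
    · simp; module
    · simp; ring
  right_distrib x y z := by
    ext
    · simp [add_mul]
    · simp; module
    · simp; ring

instance : Algebra k (PairingAlgebra β) := RingHom.toAlgebra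
  { toFun r := ⟨r, 0, 0⟩
    map_one' := rfl
    map_mul' r s := by ext <;> simp
    map_zero' := rfl
    map_add' r s := by ext <;> simp }

@[simp] lemma base_smul (r : k) (x : PairingAlgebra β) : (r • x).base = r * x.base := by
  simp [Algebra.smul_def, RingHom.algebraMap_toAlgebra]
@[simp] lemma vec_smul (r : k) (x : PairingAlgebra β) : (r • x).vec = r • x.vec := by
  simp [Algebra.smul_def, RingHom.algebraMap_toAlgebra]
@[simp] lemma top_smul (r : k) (x : PairingAlgebra β) : (r • x).top = r * x.top := by
  simp [Algebra.smul_def, RingHom.algebraMap_toAlgebra]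

def derivationOfSkew (L : Module.End k V) (hL : ∀ u v, β (L u) v + β u (L v) = 0) :
    Derivation k (PairingAlgebra β) (PairingAlgebra β) :=
  Derivation.mk'
    { toFun x := ⟨0, L x.vec, 0⟩
      map_add' x y := by ext <;> simp
      map_smul' r x := by ext <;> simp }
    fun x y => by
      ext
      · simp
      · simp [add_comm]
      · simp; linear_combination -hL x.vec y.vec - hL y.vec x.vec

@[simp] lemma derivationOfSkew_apply (L : Module.End k V)
    (hL : ∀ u v, β (L u) v + β u (L v) = 0) (x : PairingAlgebra β) :
    derivationOfSkew L hL x = ⟨0, L x.vec, 0⟩ := rfl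

end PairingAlgebra

noncomputable section Model

open Polynomial

variable (k : Type*) [CommRing k] (N : ℕ)

def twistedPairing : LinearMap.BilinForm k k[X] :=
  LinearMap.mk₂ k (fun f g => (f * g.comp (-X)).coeff N)
    (fun _ _ _ => by simp [add_mul]) (fun _ _ _ => by simp)
    (fun _ _ _ => by simp [mul_add]) (fun _ _ _ => by simp)

variable {k N}

lemma twistedPairing_apply (f g : k[X]) : twistedPairing k N f g = (f * g.comp (-X)).coeff N :=
  rfl

lemma twistedPairing_X_mul_add (f g : k[X]) :
    twistedPairing k N (X * f) g + twistedPairing k N f (X * g) = 0 := by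
  rw [twistedPairing_apply, twistedPairing_apply, ← coeff_add, mul_comp, X_comp,
    show X * f * g.comp (-X) + f * (-X * g.comp (-X)) = 0 by ring, coeff_zero]

lemma twistedPairing_X_pow_self (i : ℕ) :
    twistedPairing k N (X ^ i) (X ^ i) = if N = 2 * i then (-1) ^ i else 0 := by
  rw [twistedPairing_apply, X_pow_comp, neg_pow,
    show X ^ i * ((-1) ^ i * X ^ i) = C ((-1) ^ i : k) * X ^ (2 * i) by simp; ring,
    coeff_C_mul_X_pow]

variable (k N)

abbrev TwistedAlgebra := PairingAlgebra (twistedPairing k N)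

def twistedX (i : ℕ) : TwistedAlgebra k N := ⟨0, X ^ i, 0⟩

def shiftDerivation : Derivation k (TwistedAlgebra k N) (TwistedAlgebra k N) :=
  PairingAlgebra.derivationOfSkew (LinearMap.mulLeft k X) fun f g => by
    simpa using twistedPairing_X_mul_add f g

variable {k N}

lemma shiftDerivation_twistedX (i : ℕ) :
    shiftDerivation k N (twistedX k N i) = twistedX k N (i + 1) := by
  rw [shiftDerivation, PairingAlgebra.derivationOfSkew_apply]
  ext <;> simp [twistedX, pow_succ']

lemma twistedX_mul_self (i : ℕ) :
    twistedX k N i * twistedX k N i = ⟨0, 0, 2 * twistedPairing k N (X ^ i) (X ^ i)⟩ := by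
  ext <;> simp [twistedX]; ring

variable (k N)

def modelGen : ℕ → (TwistedAlgebra k N)[X]
  | 0 => X
  | i + 1 => C (twistedX k N (i + 1))

def modelMap : MvPolynomial ℕ k →ₐ[k] (TwistedAlgebra k N)[X] :=
  MvPolynomial.aeval (modelGen k N)

def modelDerivation : ℕ → Derivation k (TwistedAlgebra k N)[X] (TwistedAlgebra k N)[X]
  | 0 => PolynomialModule.equivPolynomialSelf.compDer (shiftDerivation k N).mapCoeffs
  | j + 1 =>
    (-C (twistedX k N (j + 2))) • (derivative' (R := TwistedAlgebra k N)).restrictScalars k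

variable {k N}

lemma modelMap_bracket_X_X [IsDomain k] [CharZero k]
    {B : MvPolynomial ℕ k → MvPolynomial ℕ k → MvPolynomial ℕ k} (hB : IsPoissonBracket k B)
    (hxx : ∀ i j : ℕ, 1 ≤ i → 1 ≤ j → B (MvPolynomial.X i) (MvPolynomial.X j) = 0)
    (hyx : ∀ i : ℕ, 1 ≤ i → B (MvPolynomial.X 0) (MvPolynomial.X i) = MvPolynomial.X (i + 1))
    (i j : ℕ) :
    modelMap k N (B (MvPolynomial.X i) (MvPolynomial.X j)) =
      modelDerivation k N i (modelMap k N (MvPolynomial.X j)) := by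
  rcases i with _ | i <;> rcases j with _ | j
  · simp [hB.self_eq_zero, modelMap, modelGen, modelDerivation]
  · simp [hyx (j + 1) (by omega), modelMap, modelGen, modelDerivation, shiftDerivation_twistedX]
  · rw [hB.2.2.1, hyx (i + 1) (by omega)]
    simp [modelMap, modelGen, modelDerivation]
  · simp [hxx (i + 1) (j + 1) (by omega) (by omega), modelMap, modelGen, modelDerivation]

lemma modelMap_X_sq {i : ℕ} (hi : 1 ≤ i) :
    modelMap k N (MvPolynomial.X i ^ 2) = C ⟨0, 0, 2 * twistedPairing k N (X ^ i) (X ^ i)⟩ := by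
  obtain ⟨j, rfl⟩ := Nat.exists_eq_add_of_le' hi
  rw [map_pow, sq, ← twistedX_mul_self]
  simp [modelMap, modelGen]

end Model

section Chain

open MvPolynomial

variable {k : Type*} [CommRing k]

lemma X_sq_mem_ker_modelMap {N i : ℕ} (hi : 1 ≤ i) (hN : N ≠ 2 * i) :
    (X i : MvPolynomial ℕ k) ^ 2 ∈ RingHom.ker (modelMap k N) := by
  rw [RingHom.mem_ker, modelMap_X_sq hi, twistedPairing_X_pow_self, if_neg hN, mul_zero]
  exact Polynomial.C_eq_zero.mpr rfl

lemma X_sq_notMem_ker_modelMap [NeZero (2 : k)] {i : ℕ} (hi : 1 ≤ i) :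
    (X i : MvPolynomial ℕ k) ^ 2 ∉ RingHom.ker (modelMap k (2 * i)) := by
  rw [RingHom.mem_ker, modelMap_X_sq hi, twistedPairing_X_pow_self, if_pos rfl,
    Polynomial.C_eq_zero]
  intro h
  have htop := congrArg PairingAlgebra.top h
  exact two_ne_zero ((isUnit_neg_one.pow i).mul_left_eq_zero.mp htop)

lemma poissonGen_X_sq_lt_succ [IsDomain k] [CharZero k]
    {B : MvPolynomial ℕ k → MvPolynomial ℕ k → MvPolynomial ℕ k} (hB : IsPoissonBracket k B)
    (hxx : ∀ i j : ℕ, 1 ≤ i → 1 ≤ j → B (X i) (X j) = 0)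
    (hyx : ∀ i : ℕ, 1 ≤ i → B (X 0) (X i) = X (i + 1)) (n : ℕ) :
    poissonGen B ((fun i : ℕ => (X i : MvPolynomial ℕ k) ^ 2) '' {i : ℕ | 1 ≤ i ∧ i ≤ n}) <
      poissonGen B ((fun i : ℕ => (X i : MvPolynomial ℕ k) ^ 2) ''
        {i : ℕ | 1 ≤ i ∧ i ≤ n + 1}) := by
  refine poissonGen_lt_of_notMem B (Set.image_mono fun i hi => ⟨hi.1, hi.2.trans n.le_succ⟩)
    (isPoissonIdeal_ker hB (modelMap k (2 * (n + 1))) (modelDerivation k _)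
      (modelMap_bracket_X_X hB hxx hyx)) ?_ ⟨n + 1, ⟨by omega, le_rfl⟩, rfl⟩
    (X_sq_notMem_ker_modelMap (by omega))
  rintro _ ⟨i, ⟨hi, hin⟩, rfl⟩
  exact X_sq_mem_ker_modelMap hi (by omega)

end Chain

open MvPolynomial

/-- Let `k` be a field of characteristic zero and let
`A = k[x₁, x₂, …, y]` be the polynomial algebra in the variables `xᵢ = X i` (`i ≥ 1`) and
`y = X 0` (the symmetric algebra of the Lie algebra `D`), endowed with its Poisson bracket
determined by `{xᵢ, xⱼ} = 0` and `{y, xᵢ} = x_{i+1}`.  Then the chain of Poisson ideals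
`[x₁²] ⊆ [x₁², x₂²] ⊆ ⋯` is strictly increasing; in particular `A` does not have the ACC on
Poisson ideals. -/
theorem symmetricAlgebraD_not_poissonACC
    {k : Type*} [Field k] [CharZero k]
    (B : MvPolynomial ℕ k → MvPolynomial ℕ k → MvPolynomial ℕ k)
    (hB : IsPoissonBracket k B)
    (hxx : ∀ i j : ℕ, 1 ≤ i → 1 ≤ j → B (X i) (X j) = 0)
    (hyx : ∀ i : ℕ, 1 ≤ i → B (X 0) (X i) = X (i + 1)) :
    (∀ n : ℕ, 1 ≤ n →
      poissonGen B ((fun i : ℕ => (X i : MvPolynomial ℕ k) ^ 2) '' {i : ℕ | 1 ≤ i ∧ i ≤ n}) <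
      poissonGen B ((fun i : ℕ => (X i : MvPolynomial ℕ k) ^ 2) ''
        {i : ℕ | 1 ≤ i ∧ i ≤ n + 1})) ∧
    ¬ PoissonACC B := by
  have hlt := poissonGen_X_sq_lt_succ hB hxx hyx
  exact ⟨fun n _ => hlt n, not_poissonACC_of_strictMono B (fun _ => isPoissonIdeal_poissonGen B _)
    (strictMono_nat_of_lt_succ hlt)⟩
end

section
/- Let k be a field of characteristic zero and let A = k[x₁, x₂, x₃, …] be the polynomial algebra in countably many variables x_i indexed by the positive integers (the symmetric algebra of the positive Witt algebra W₊), equipped with a bracket {-,-} : A × A → A that is k-bilinear, antisymmetric, satisfies the Jacobi identity, is a derivation in each argument, and satisfies {x_i, x_j} = (j − i)·x_{i+j} for all i, j ≥ 1. Then A satisfies the ACC on radical Poisson ideals. -/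
open MvPolynomial

/-!
Radical Poisson ideals satisfy the ACC as soon as each of them is the radical Poisson ideal
generated by a finite set. If one is not, Zorn's lemma gives a maximal such `Q`, and `Q` is
prime, because the radical Poisson ideals generated by `U` and by `V` meet inside the one
generated by `U * V`.

Choose `p` and `f ∈ Q ∩ k[x₁, …, x_p]` whose partial derivative `S = ∂f/∂x_p` is not in `Q`. If
`p = 1`, then `{x₂, f} = -S x₃ ∈ Q` puts `x₃` in the prime `Q`, and `f = x₃` does the job with
`p = 3`. For `p ≥ 2`, `{x₁, x_n} = (n - 1) x_{n+1}` shows that iterating `{x₁, -}` on `f` gives,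
for every `N ≥ p`, an element `c S x_{N+1} + (terms in x₁, …, x_N)` of the Poisson ideal of `f`
with `c ≠ 0`. By induction on `N`, every polynomial times a power of `S` is congruent to an
element of `k[x₁, …, x_p]` modulo that ideal, so by Hilbert's basis theorem for `k[x₁, …, x_p]`
the product `S Q` lies in the radical Poisson ideal generated by a finite subset `C` of `Q`.
By maximality, `Q` and `S` generate the same radical Poisson ideal as `S` and a finite `E ⊆ Q`.
For `g ∈ Q`, `g²` then lies in the radical Poisson ideal generated by `g E ∪ {g S}`, hence in
the one generated by `E ∪ C`; so `E ∪ C` generates `Q`, a contradiction.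
-/

section RadicalPoisson

variable {A : Type*} [CommRing A] (B : A → A → A)

def IsRadicalPoissonIdeal (I : Ideal A) : Prop := IsPoissonIdeal B I ∧ I.IsRadical

def radicalPoissonSpan (S : Set A) : Ideal A := sInf {I | IsRadicalPoissonIdeal B I ∧ S ⊆ I}

def IsRadicalPoissonFG (I : Ideal A) : Prop := ∃ G : Finset A, I = radicalPoissonSpan B G

variable {B}

lemma IsRadicalPoissonIdeal.inf {I J : Ideal A} (hI : IsRadicalPoissonIdeal B I)
    (hJ : IsRadicalPoissonIdeal B J) : IsRadicalPoissonIdeal B (I ⊓ J) :=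
  ⟨fun x _ hy => ⟨hI.1 x _ hy.1, hJ.1 x _ hy.2⟩, hI.2.inf hJ.2⟩

lemma isRadicalPoissonIdeal_iSup {ι : Type*} [Nonempty ι] {I : ι → Ideal A}
    (hI : ∀ i, IsRadicalPoissonIdeal B (I i)) (hdir : Directed (· ≤ ·) I) :
    IsRadicalPoissonIdeal B (⨆ i, I i) := by
  have hmem (x : A) : x ∈ ⨆ i, I i ↔ ∃ i, x ∈ I i := Submodule.mem_iSup_of_directed I hdir
  refine ⟨fun x y hy => ?_, fun x ⟨n, hx⟩ => ?_⟩
  · obtain ⟨i, hi⟩ := (hmem y).1 hy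
    exact (hmem _).2 ⟨i, (hI i).1 x y hi⟩
  · obtain ⟨i, hi⟩ := (hmem _).1 hx
    exact (hmem x).2 ⟨i, (hI i).2 ⟨n, hi⟩⟩

lemma isRadicalPoissonIdeal_radicalPoissonSpan (S : Set A) :
    IsRadicalPoissonIdeal B (radicalPoissonSpan B S) := by
  refine ⟨fun x y hy => ?_, fun x ⟨n, hx⟩ => ?_⟩ <;>
    simp only [radicalPoissonSpan, Ideal.mem_sInf] at * <;> intro I hI
  · exact hI.1.1 x y (hy hI)
  · exact hI.1.2 ⟨n, hx hI⟩

lemma subset_radicalPoissonSpan (S : Set A) : S ⊆ radicalPoissonSpan B S :=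
  fun _ hx => Ideal.mem_sInf.2 fun _ hI => hI.2 hx

lemma radicalPoissonSpan_le {S : Set A} {I : Ideal A} (hI : IsRadicalPoissonIdeal B I)
    (hS : S ⊆ I) : radicalPoissonSpan B S ≤ I :=
  sInf_le ⟨hI, hS⟩

lemma radicalPoissonSpan_mono {S T : Set A} (h : S ⊆ T) :
    radicalPoissonSpan B S ≤ radicalPoissonSpan B T :=
  radicalPoissonSpan_le (isRadicalPoissonIdeal_radicalPoissonSpan T)
    (h.trans (subset_radicalPoissonSpan T))

lemma radicalPoissonSpan_eq_self {I : Ideal A} (hI : IsRadicalPoissonIdeal B I) :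
    radicalPoissonSpan B I = I :=
  (radicalPoissonSpan_le hI subset_rfl).antisymm (subset_radicalPoissonSpan _)

lemma lt_radicalPoissonSpan_insert {I : Ideal A} (hI : IsRadicalPoissonIdeal B I) {s : A}
    (hs : s ∉ I) : I < radicalPoissonSpan B (insert s I) := by
  refine lt_of_le_of_ne ?_ fun h => hs ?_
  · exact (radicalPoissonSpan_eq_self hI).ge.trans
      (radicalPoissonSpan_mono (Set.subset_insert _ _))
  · exact h ▸ subset_radicalPoissonSpan _ (Set.mem_insert _ _)

lemma isRadicalPoissonFG_top : IsRadicalPoissonFG B (⊤ : Ideal A) :=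
  ⟨{1}, ((Ideal.eq_top_iff_one _).2 (subset_radicalPoissonSpan _ (by simp))).symm⟩

lemma directed_radicalPoissonSpan_finset (S : Set A) :
    Directed (· ≤ ·) fun E : {E : Finset A // ↑E ⊆ S} => radicalPoissonSpan B E := by
  classical
  exact fun E F => ⟨⟨E.1 ∪ F.1, by simpa using And.intro E.2 F.2⟩,
    radicalPoissonSpan_mono (by simp), radicalPoissonSpan_mono (by simp)⟩

lemma radicalPoissonSpan_eq_iSup_finset (S : Set A) :
    radicalPoissonSpan B S = ⨆ E : {E : Finset A // ↑E ⊆ S}, radicalPoissonSpan B E := by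
  have : Nonempty {E : Finset A // ↑E ⊆ S} := ⟨⟨∅, by simp⟩⟩
  refine le_antisymm ?_ (iSup_le fun E => radicalPoissonSpan_mono E.2)
  refine radicalPoissonSpan_le (isRadicalPoissonIdeal_iSup
    (fun _ => isRadicalPoissonIdeal_radicalPoissonSpan _)
    (directed_radicalPoissonSpan_finset S)) fun x hx => ?_
  exact Ideal.mem_iSup_of_mem ⟨{x}, by simpa using hx⟩ (subset_radicalPoissonSpan _ (by simp))

lemma exists_eq_iSup_of_isRadicalPoissonFG {ι : Type*} [Nonempty ι] {I : ι → Ideal A}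
    (hI : ∀ i, IsRadicalPoissonIdeal B (I i)) (hdir : Directed (· ≤ ·) I)
    (hfg : IsRadicalPoissonFG B (⨆ i, I i)) : ∃ i, I i = ⨆ i, I i := by
  classical
  obtain ⟨G, hG⟩ := hfg
  have hmem (g : A) (hg : g ∈ G) : ∃ i, g ∈ I i :=
    (Submodule.mem_iSup_of_directed I hdir).1 (hG ▸ subset_radicalPoissonSpan _ hg)
  choose! i hi using hmem
  obtain ⟨j, hj⟩ := hdir.finset_le (G.image i)
  refine ⟨j, le_antisymm (le_iSup I j) ?_⟩
  exact hG ▸ radicalPoissonSpan_le (hI j) fun g hg =>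
    hj _ (Finset.mem_image_of_mem _ hg) (hi g hg)

lemma IsRadicalPoissonFG.exists_finset_subset {S : Set A}
    (hfg : IsRadicalPoissonFG B (radicalPoissonSpan B S)) :
    ∃ E : Finset A, ↑E ⊆ S ∧ radicalPoissonSpan B S = radicalPoissonSpan B E := by
  have : Nonempty {E : Finset A // ↑E ⊆ S} := ⟨⟨∅, by simp⟩⟩
  rw [radicalPoissonSpan_eq_iSup_finset] at hfg
  obtain ⟨E, hE⟩ := exists_eq_iSup_of_isRadicalPoissonFG
    (fun _ => isRadicalPoissonIdeal_radicalPoissonSpan _) (directed_radicalPoissonSpan_finset S) hfg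
  exact ⟨E.1, E.2, by rw [radicalPoissonSpan_eq_iSup_finset, hE]⟩

lemma exists_maximal_not_isRadicalPoissonFG {I : Ideal A} (hI : IsRadicalPoissonIdeal B I)
    (hfg : ¬ IsRadicalPoissonFG B I) :
    ∃ Q, Maximal (fun J => IsRadicalPoissonIdeal B J ∧ ¬ IsRadicalPoissonFG B J) Q := by
  refine (zorn_le_nonempty₀ {J | IsRadicalPoissonIdeal B J ∧ ¬ IsRadicalPoissonFG B J}
    (fun c hc hchain J hJ => ?_) I ⟨hI, hfg⟩).imp fun _ hQ => hQ.2
  have : Nonempty c := ⟨⟨J, hJ⟩⟩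
  have hdir : Directed (· ≤ ·) fun J : c => J.1 := hchain.directed
  have hrad : ∀ J : c, IsRadicalPoissonIdeal B J.1 := fun J => (hc J.2).1
  refine ⟨sSup c, ⟨sSup_eq_iSup' c ▸ isRadicalPoissonIdeal_iSup hrad hdir, fun hfg => ?_⟩,
    fun _ => le_sSup⟩
  obtain ⟨J, hJ⟩ := exists_eq_iSup_of_isRadicalPoissonFG hrad hdir (sSup_eq_iSup' c ▸ hfg)
  exact (hc J.2).2 (hJ ▸ sSup_eq_iSup' c ▸ hfg)

lemma Maximal.isRadicalPoissonFG_of_gt {Q J : Ideal A}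
    (hQ : Maximal (fun J => IsRadicalPoissonIdeal B J ∧ ¬ IsRadicalPoissonFG B J) Q)
    (hJ : IsRadicalPoissonIdeal B J) (hQJ : Q < J) : IsRadicalPoissonFG B J := by
  by_contra hfg
  exact hQ.not_prop_of_gt hQJ ⟨hJ, hfg⟩

lemma poissonRadicalACC_of_forall_isRadicalPoissonFG
    (h : ∀ I, IsRadicalPoissonIdeal B I → IsRadicalPoissonFG B I) : PoissonRadicalACC B := by
  intro c hpois hrad hmono
  have hc (n : ℕ) : IsRadicalPoissonIdeal B (c n) := ⟨hpois n, hrad n⟩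
  obtain ⟨N, hN⟩ := exists_eq_iSup_of_isRadicalPoissonFG hc hmono.directed_le
    (h _ (isRadicalPoissonIdeal_iSup hc hmono.directed_le))
  exact ⟨N, fun n hn => le_antisymm (hN ▸ le_iSup c n) (hmono hn)⟩

end RadicalPoisson

section Leibniz

open Pointwise

variable {A : Type*} [CommRing A] {B : A → A → A}
  (hleib : ∀ a b c : A, B a (b * c) = B a b * c + b * B a c)
include hleib

lemma IsRadicalPoissonIdeal.colon {J : Ideal A} (hJ : IsRadicalPoissonIdeal B J) (a : A) :
    IsRadicalPoissonIdeal B (J.colon {a}) := by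
  have hmem (y : A) : y ∈ J.colon {a} ↔ y * a ∈ J := by
    rw [Submodule.mem_colon_singleton, smul_eq_mul]
  refine ⟨fun c y hy => ?_, fun y ⟨n, hy⟩ => ?_⟩ <;> rw [hmem] at hy ⊢
  · refine hJ.2 ⟨2, ?_⟩
    -- `a {c, y a} = a² {c, y} + {c, a} (y a)`, so `a² {c, y} ∈ J`
    have h : a * (a * B c y) = a * B c (y * a) - B c a * (y * a) := by rw [hleib]; ring
    have ha : a * (a * B c y) ∈ J :=
      h ▸ J.sub_mem (J.mul_mem_left _ (hJ.1 c _ hy)) (J.mul_mem_left _ hy)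
    rw [show (B c y * a) ^ 2 = a * (a * B c y) * B c y by ring]
    exact J.mul_mem_right _ ha
  · rcases n with _ | n
    · simpa using J.mul_mem_left y hy
    · refine hJ.2 ⟨n + 1, ?_⟩
      rw [show (y * a) ^ (n + 1) = a ^ n * (y ^ (n + 1) * a) by ring]
      exact J.mul_mem_left _ hy

lemma mul_mem_of_mem_radicalPoissonSpan {J : Ideal A} (hJ : IsRadicalPoissonIdeal B J) {a x : A}
    {S : Set A} (hS : ∀ s ∈ S, a * s ∈ J) (hx : x ∈ radicalPoissonSpan B S) : a * x ∈ J := by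
  have hle := radicalPoissonSpan_le (hJ.colon hleib a) fun s hs => by
    simpa [Submodule.mem_colon_singleton, mul_comm] using hS s hs
  simpa [Submodule.mem_colon_singleton, mul_comm] using hle hx

lemma inf_radicalPoissonSpan_le (S T : Set A) :
    radicalPoissonSpan B S ⊓ radicalPoissonSpan B T ≤ radicalPoissonSpan B (S * T) := by
  have hST := isRadicalPoissonIdeal_radicalPoissonSpan (B := B) (S * T)
  rintro x ⟨hxS, hxT⟩
  have hsx (s : A) (hs : s ∈ S) : s * x ∈ radicalPoissonSpan B (S * T) :=
    mul_mem_of_mem_radicalPoissonSpan hleib hST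
      (fun t ht => subset_radicalPoissonSpan _ (Set.mul_mem_mul hs ht)) hxT
  exact hST.2 ⟨2, pow_two x ▸ mul_mem_of_mem_radicalPoissonSpan hleib hST
    (fun s hs => mul_comm s x ▸ hsx s hs) hxS⟩

lemma IsRadicalPoissonFG.inf {I J : Ideal A} (hI : IsRadicalPoissonIdeal B I)
    (hJ : IsRadicalPoissonIdeal B J) (hIfg : IsRadicalPoissonFG B I)
    (hJfg : IsRadicalPoissonFG B J) : IsRadicalPoissonFG B (I ⊓ J) := by
  classical
  obtain ⟨G, rfl⟩ := hIfg
  obtain ⟨H, rfl⟩ := hJfg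
  refine ⟨G * H, le_antisymm ?_ (radicalPoissonSpan_le (hI.inf hJ) ?_)⟩
  · simpa [Finset.coe_mul] using inf_radicalPoissonSpan_le hleib (B := B) G H
  · rw [Finset.coe_mul]
    rintro _ ⟨g, hg, h, hh, rfl⟩
    exact ⟨Ideal.mul_mem_right _ _ (subset_radicalPoissonSpan _ hg),
      Ideal.mul_mem_left _ _ (subset_radicalPoissonSpan _ hh)⟩

lemma radicalPoissonSpan_insert_inf {Q : Ideal A} (hQ : IsRadicalPoissonIdeal B Q) {a b : A}
    (hab : a * b ∈ Q) :
    radicalPoissonSpan B (insert a Q) ⊓ radicalPoissonSpan B (insert b Q) = Q := by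
  refine le_antisymm ((inf_radicalPoissonSpan_le hleib _ _).trans (radicalPoissonSpan_le hQ ?_))
    (le_inf ?_ ?_)
  · rintro _ ⟨u, hu, v, hv, rfl⟩
    rcases hu with rfl | hu
    · rcases hv with rfl | hv
      · exact hab
      · exact Q.mul_mem_left _ hv
    · exact Q.mul_mem_right _ hu
  all_goals exact fun x hx => subset_radicalPoissonSpan _ (Set.mem_insert_of_mem _ hx)

lemma Maximal.isPrime_of_not_isRadicalPoissonFG {Q : Ideal A}
    (hQ : Maximal (fun J => IsRadicalPoissonIdeal B J ∧ ¬ IsRadicalPoissonFG B J) Q) :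
    Q.IsPrime := by
  refine ⟨fun h => hQ.1.2 (h ▸ isRadicalPoissonFG_top), fun {a b} hab => ?_⟩
  by_contra! h
  have hfg {s : A} (hs : s ∉ Q) : IsRadicalPoissonFG B (radicalPoissonSpan B (insert s Q)) :=
    hQ.isRadicalPoissonFG_of_gt (isRadicalPoissonIdeal_radicalPoissonSpan _)
      (lt_radicalPoissonSpan_insert hQ.1.1 hs)
  apply hQ.1.2
  rw [← radicalPoissonSpan_insert_inf hleib hQ.1.1 hab]
  exact (hfg h.1).inf hleib (isRadicalPoissonIdeal_radicalPoissonSpan _)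
    (isRadicalPoissonIdeal_radicalPoissonSpan _) (hfg h.2)

lemma isRadicalPoissonFG_of_mul_mem {Q : Ideal A} (hQ : IsRadicalPoissonIdeal B Q) {s : A}
    {C : Finset A} (hCQ : (C : Set A) ⊆ Q) (hC : ∀ g ∈ Q, s * g ∈ radicalPoissonSpan B C)
    (hfg : IsRadicalPoissonFG B (radicalPoissonSpan B (insert s Q))) :
    IsRadicalPoissonFG B Q := by
  classical
  obtain ⟨E, hEsub, hE⟩ := hfg.exists_finset_subset
  refine ⟨E.erase s ∪ C, le_antisymm (fun g hg => ?_) (radicalPoissonSpan_le hQ ?_)⟩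
  · have hspan := isRadicalPoissonIdeal_radicalPoissonSpan (B := B) ↑(E.erase s ∪ C)
    refine hspan.2 ⟨2, pow_two g ▸ mul_mem_of_mem_radicalPoissonSpan hleib hspan (fun e he => ?_)
      (hE ▸ subset_radicalPoissonSpan _ (Set.mem_insert_of_mem _ hg))⟩
    by_cases hes : e = s
    · rw [hes, mul_comm]
      exact radicalPoissonSpan_mono (by simp) (hC g hg)
    · exact Ideal.mul_mem_left _ _ (subset_radicalPoissonSpan _ (by simp [he, hes]))
  · intro x hx
    simp only [Finset.coe_union, Finset.coe_erase, Set.mem_union, Set.mem_sdiff] at hx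
    rcases hx with ⟨hxE, hxs⟩ | hxC
    · exact (hEsub hxE).resolve_left hxs
    · exact hCQ hxC

end Leibniz

section MvPolynomialLemmas

variable {σ R : Type*} [CommSemiring R]

lemma MvPolynomial.pderiv_mem_supported {s : Set σ} {f : MvPolynomial σ R} (i : σ)
    (hf : f ∈ supported R s) : pderiv i f ∈ supported R s := by
  classical
  rw [mem_supported] at hf ⊢
  intro j hj
  obtain ⟨m, hm, hjm⟩ := (mem_vars_iff_mem_support j).1 hj
  have hm' : m + Finsupp.single i 1 ∈ f.support := by
    rw [mem_support_iff, coeff_pderiv] at hm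
    exact mem_support_iff.2 (left_ne_zero_of_mul hm)
  exact hf ((mem_vars_iff_mem_support j).2 ⟨_, hm', by simp_all⟩)

lemma MvPolynomial.degreeOf_pderiv_lt {i : σ} {f : MvPolynomial σ R} (h : degreeOf i f ≠ 0) :
    degreeOf i (pderiv i f) < degreeOf i f := by
  classical
  suffices degreeOf i (pderiv i f) + 1 ≤ degreeOf i f by omega
  rw [← Nat.le_sub_iff_add_le (Nat.pos_of_ne_zero h), degreeOf_le_iff]
  intro m hm
  rw [mem_support_iff, coeff_pderiv] at hm
  have := monomial_le_degreeOf i (mem_support_iff.2 (left_ne_zero_of_mul hm))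
  simp only [Finsupp.add_apply, Finsupp.single_eq_same] at this
  omega

lemma MvPolynomial.pderiv_ne_zero [NoZeroDivisors R] [CharZero R] {i : σ} {f : MvPolynomial σ R}
    (h : degreeOf i f ≠ 0) : pderiv i f ≠ 0 := by
  classical
  obtain ⟨m, hm, hmi⟩ : ∃ m ∈ f.support, m i = degreeOf i f := by
    rw [degreeOf_eq_sup]
    obtain ⟨m, hm, hmi⟩ := Finset.exists_mem_eq_sup _
      (support_nonempty.2 fun hf : f = 0 => h (by simp [hf])) fun m : σ →₀ ℕ => m i
    exact ⟨m, hm, hmi.symm⟩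
  have hsub : m - Finsupp.single i 1 + Finsupp.single i 1 = m :=
    tsub_add_cancel_of_le (Finsupp.single_le_iff.2 (by omega))
  intro h0
  have := congrArg (coeff (m - Finsupp.single i 1)) h0
  rw [coeff_pderiv, hsub, coeff_zero] at this
  exact mul_ne_zero (mem_support_iff.1 hm) (Nat.cast_add_one_ne_zero _) this

lemma MvPolynomial.mem_supported_diff_of_degreeOf_eq_zero {s : Set σ} {f : MvPolynomial σ R}
    {i : σ} (hf : f ∈ supported R s) (h : degreeOf i f = 0) : f ∈ supported R (s \ {i}) := by
  rw [mem_supported] at hf ⊢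
  exact fun j hj => ⟨hf hj, fun hji => (mem_vars_iff_degreeOf_ne_zero.1 (hji ▸ hj)) h⟩

lemma MvPolynomial.derivation_eq_sum_pderiv
    (D : Derivation R (MvPolynomial σ R) (MvPolynomial σ R)) {s : Finset σ} {f : MvPolynomial σ R} (hf : f ∈ supported R ↑s) :
    D f = ∑ i ∈ s, pderiv i f * D (X i) := by
  classical
  let D' : Derivation R (MvPolynomial σ R) (MvPolynomial σ R) := ∑ i ∈ s, D (X i) • pderiv i
  have hD' (g : MvPolynomial σ R) : D' g = ∑ i ∈ s, pderiv i g * D (X i) := by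
    rw [← Derivation.coeFnAddMonoidHom_apply, map_sum, Finset.sum_apply]
    simp [Derivation.smul_apply, mul_comm]
  rw [← hD']
  refine derivation_eqOn_supported (fun j hj => ?_) hf
  simp [hD', pderiv_X, Pi.single_apply, Finset.mem_coe.1 hj]

lemma MvPolynomial.exists_finset_spanning_inf_supported {R : Type*} [CommRing R] [IsNoetherianRing R]
    {s : Set σ} (hs : s.Finite) (Q : Ideal (MvPolynomial σ R)) :
    ∃ C : Finset (MvPolynomial σ R), (C : Set (MvPolynomial σ R)) ⊆ Q ∧
      ∀ g ∈ Q, g ∈ supported R s → g ∈ Ideal.span (C : Set (MvPolynomial σ R)) := by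
  classical
  have := hs.to_subtype
  have := isNoetherianRing_of_ringEquiv _ (supportedEquivMvPolynomial (R := R) s).symm.toRingEquiv
  let ι : supported R s →+* MvPolynomial σ R := (supported R s).val
  obtain ⟨G, hG⟩ := IsNoetherian.noetherian (Q.comap ι)
  refine ⟨G.image ι, ?_, fun g hgQ hgs => ?_⟩
  · rw [Finset.coe_image, Set.image_subset_iff]
    exact fun x hx => (hG.le (Ideal.subset_span hx) : x ∈ Q.comap ι)
  · have : (⟨g, hgs⟩ : supported R s) ∈ Ideal.span G := hG.ge hgQ
    have := Ideal.mem_map_of_mem ι this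
    rwa [Ideal.map_span, ← Finset.coe_image] at this

end MvPolynomialLemmas

section SaturationModulo

variable {k A : Type*} [CommRing k] [CommRing A] [Algebra k A]
  (R₀ : Subalgebra k A) (J : Ideal A) {s : A} (hs : s ∈ R₀)

def Subalgebra.saturationModulo : Subalgebra k A :=
  ((R₀.map (Ideal.Quotient.mkₐ k J)).saturation (Submonoid.powers (Ideal.Quotient.mk J s))
    (Submonoid.powers_le.2 (Subalgebra.mem_map.2 ⟨s, hs, rfl⟩))).comap (Ideal.Quotient.mkₐ k J)

variable {R₀ J}

lemma Subalgebra.mem_saturationModulo {g : A} :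
    g ∈ R₀.saturationModulo J hs ↔ ∃ n : ℕ, ∃ r ∈ R₀, s ^ n * g - r ∈ J := by
  simp only [saturationModulo, mem_comap, mem_saturation_iff, Submonoid.mem_powers_iff,
    smul_eq_mul, mem_map, Ideal.Quotient.mkₐ_eq_mk]
  constructor
  · rintro ⟨_, ⟨n, rfl⟩, r, hr, h⟩
    exact ⟨n, r, hr, Ideal.Quotient.eq.1 (by rw [map_mul, map_pow, h])⟩
  · rintro ⟨n, r, hr, h⟩
    exact ⟨_, ⟨n, rfl⟩, r, hr, by rw [← map_pow, ← map_mul]; exact (Ideal.Quotient.eq.2 h).symm⟩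

lemma Subalgebra.le_saturationModulo : R₀ ≤ R₀.saturationModulo J hs :=
  fun g hg => (mem_saturationModulo hs).2 ⟨0, g, hg, by simp⟩

lemma Subalgebra.mem_saturationModulo_of_smul_mul_add_mem {c : k} (hc : IsUnit c) {x t : A}
    (ht : t ∈ R₀.saturationModulo J hs) (h : c • (s * x) + t ∈ J) :
    x ∈ R₀.saturationModulo J hs := by
  obtain ⟨n, r, hr, htr⟩ := (mem_saturationModulo hs).1 ht
  obtain ⟨u, rfl⟩ := hc
  refine (mem_saturationModulo hs).2 ⟨n + 1, -((↑u⁻¹ : k) • r), R₀.neg_mem (R₀.smul_mem hr _), ?_⟩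
  have key : s ^ (n + 1) * x - -((↑u⁻¹ : k) • r)
      = (↑u⁻¹ : k) • (s ^ n * ((u : k) • (s * x) + t) - (s ^ n * t - r)) := by
    rw [smul_sub, smul_sub, mul_add, smul_add, mul_smul_comm, smul_smul]
    simp only [sub_neg_eq_add, Units.inv_mul, one_smul]
    ring
  rw [key]
  exact J.smul_of_tower_mem _ (J.sub_mem (J.mul_mem_left _ h) htr)

end SaturationModulo

section BracketDerivation

variable {k A : Type*} [CommRing k] [CommRing A] [Algebra k A] {B : A → A → A}

lemma IsPoissonBracket.add_right_s10 (hB : IsPoissonBracket k B) (a x y : A) :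
    B a (x + y) = B a x + B a y := by
  rw [hB.2.2.1, hB.1, neg_add, ← hB.2.2.1, ← hB.2.2.1]

lemma IsPoissonBracket.smul_right (hB : IsPoissonBracket k B) (a : A) (r : k) (x : A) :
    B a (r • x) = r • B a x := by
  rw [hB.2.2.1, hB.2.1, ← smul_neg, ← hB.2.2.1]

def IsPoissonBracket.derivation (hB : IsPoissonBracket k B) (a : A) : Derivation k A A :=
  Derivation.mk' ⟨⟨B a, hB.add_right_s10 a⟩, hB.smul_right a⟩ fun x y => by
    simp only [LinearMap.coe_mk, AddHom.coe_mk, smul_eq_mul, hB.2.2.2.2]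
    ring

@[simp]
lemma IsPoissonBracket.derivation_apply (hB : IsPoissonBracket k B) (a x : A) :
    hB.derivation a x = B a x :=
  rfl

lemma IsPoissonIdeal.iterate_mem {I : Ideal A} (hI : IsPoissonIdeal B I) (a : A) {f : A}
    (hf : f ∈ I) (j : ℕ) : (B a)^[j] f ∈ I := by
  induction j with
  | zero => exact hf
  | succ j ih => exact Function.iterate_succ_apply' (B a) j f ▸ hI a _ ih

end BracketDerivation

section PNatPolynomial

variable {k : Type*} [Field k] [CharZero k]

lemma exists_pderiv_notMem {Q : Ideal (MvPolynomial ℕ+ k)} (hbot : Q ≠ ⊥) (htop : Q ≠ ⊤) :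
    ∃ p : ℕ+, ∃ f ∈ Q, f ∈ supported k (Set.Iic p) ∧ pderiv p f ∉ Q := by
  classical
  have hex : ∃ p : ℕ+, ∃ f ∈ Q, f ∈ supported k (Set.Iic p) ∧ f ≠ 0 := by
    obtain ⟨f, hfQ, hf0⟩ := Submodule.exists_mem_ne_zero_of_ne_bot hbot
    obtain ⟨p, hp⟩ := f.vars.exists_le
    exact ⟨p, f, hfQ, mem_supported.2 hp, hf0⟩
  set p := PNat.find hex
  obtain ⟨f₀, hf₀Q, hf₀⟩ := PNat.find_spec hex
  obtain ⟨f, ⟨hfQ, hfp, hf0⟩, hmin⟩ := (measure (degreeOf p)).wf.has_min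
    {g | g ∈ Q ∧ g ∈ supported k (Set.Iic p) ∧ g ≠ 0} ⟨f₀, hf₀Q, hf₀⟩
  refine ⟨p, f, hfQ, hfp, fun hS => ?_⟩
  by_cases hd : degreeOf p f = 0
  · have hf' := mem_supported_diff_of_degreeOf_eq_zero hfp hd
    rw [Set.Iic_sdiff_right] at hf'
    rcases eq_or_ne p 1 with h1 | h1
    · rw [h1, Set.Iio_one_eq_empty, supported_empty, Algebra.mem_bot] at hf'
      obtain ⟨c, rfl⟩ := hf'
      have hc : c ≠ 0 := fun hc => hf0 (by simp [hc])
      exact htop (Q.eq_top_of_isUnit_mem hfQ ((isUnit_iff_ne_zero.2 hc).map _))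
    · obtain ⟨q, hq⟩ := PNat.exists_eq_succ_of_ne_one h1
      have hIio : Set.Iio p = Set.Iic q := by ext i; simp [hq]
      have : p ≤ q := PNat.find_min' hex ⟨f, hfQ, hIio ▸ hf', hf0⟩
      exact (PNat.lt_add_right q 1).not_ge (hq ▸ this)
  · exact hmin _ ⟨hS, pderiv_mem_supported p hfp, pderiv_ne_zero hd⟩ (degreeOf_pderiv_lt hd)

end PNatPolynomial

section WittPlus

variable {k : Type*} [Field k] {B : MvPolynomial ℕ+ k → MvPolynomial ℕ+ k → MvPolynomial ℕ+ k}
  (hB : IsPoissonBracket k B)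
  (hgen : ∀ i j : ℕ+,
      B (X i) (X j) = (((j : ℕ) : ℤ) - ((i : ℕ) : ℤ)) • (X (i + j) : MvPolynomial ℕ+ k))
include hgen

lemma bracket_X_one_X (i : ℕ+) : B (X 1) (X i) = ((i : ℕ) - 1 : k) • X (i + 1) := by
  rw [hgen, add_comm, ← Int.cast_smul_eq_zsmul k]
  push_cast
  rfl

include hB

lemma exists_bracket_X_one_eq (m : ℕ+) {f : MvPolynomial ℕ+ k}
    (hf : f ∈ supported k (Set.Iic m)) : ∃ T ∈ supported k (Set.Iic m),
      B (X 1) f = ((m : ℕ) - 1 : k) • (pderiv m f * X (m + 1)) + T := by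
  classical
  have hsum := derivation_eq_sum_pderiv (hB.derivation (X 1)) (s := Finset.Iic m)
    (by rwa [Finset.coe_Iic])
  simp only [IsPoissonBracket.derivation_apply, bracket_X_one_X hgen] at hsum
  rw [← Finset.Iio_insert, Finset.sum_insert Finset.notMem_Iio_self, mul_smul_comm] at hsum
  refine ⟨_, Subalgebra.sum_mem _ fun i hi => ?_, hsum⟩
  refine Subalgebra.mul_mem _ (pderiv_mem_supported i hf) (Subalgebra.smul_mem _ ?_ _)
  exact X_mem_supported.2 (Order.add_one_le_of_lt (Finset.mem_Iio.1 hi))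

lemma bracket_X_one_mem_supported (m : ℕ+) {f : MvPolynomial ℕ+ k}
    (hf : f ∈ supported k (Set.Iic m)) : B (X 1) f ∈ supported k (Set.Iic (m + 1)) := by
  obtain ⟨T, hT, hfT⟩ := exists_bracket_X_one_eq hB hgen m hf
  have hle : supported k (Set.Iic m) ≤ supported k (Set.Iic (m + 1)) :=
    supported_mono (Set.Iic_subset_Iic.2 (PNat.lt_add_right m 1).le)
  rw [hfT]
  refine Subalgebra.add_mem _ (Subalgebra.smul_mem _ (Subalgebra.mul_mem _ ?_ ?_) _) (hle hT)
  · exact hle (pderiv_mem_supported m hf)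
  · exact X_mem_supported.2 (Set.mem_Iic.2 le_rfl)

lemma bracket_X_two_eq {f : MvPolynomial ℕ+ k} (hf : f ∈ supported k (Set.Iic 1)) :
    B (X 2) f = -(pderiv 1 f * X 3) := by
  have hsum := derivation_eq_sum_pderiv (hB.derivation (X 2)) (s := {1})
    (by rwa [Finset.coe_singleton, ← PNat.bot_eq_one, ← Set.Iic_bot])
  simp only [IsPoissonBracket.derivation_apply, Finset.sum_singleton, hgen] at hsum
  rw [hsum, show (2 + 1 : ℕ+) = 3 from rfl]
  norm_num

lemma X_three_mem {Q : Ideal (MvPolynomial ℕ+ k)} (hQ : IsPoissonIdeal B Q) (hprime : Q.IsPrime)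
    {f : MvPolynomial ℕ+ k} (hfQ : f ∈ Q) (hf : f ∈ supported k (Set.Iic 1))
    (hS : pderiv 1 f ∉ Q) : X 3 ∈ Q := by
  have h := hQ (X 2) f hfQ
  rw [bracket_X_two_eq hB hgen hf, neg_mem_iff] at h
  exact (hprime.mem_or_mem h).resolve_left hS

variable [CharZero k]

lemma exists_iterate_bracket_X_one_eq {p : ℕ+} (hp : 1 < p) {f : MvPolynomial ℕ+ k}
    (hf : f ∈ supported k (Set.Iic p)) (N : ℕ+) (hN : p ≤ N) :
    ∃ j : ℕ, ∃ c : k, c ≠ 0 ∧ ∃ T ∈ supported k (Set.Iic N),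
      (B (X 1))^[j] f = c • (pderiv p f * X (N + 1)) + T := by
  induction N using PNat.recOn with
  | one => exact absurd (hp.trans_le hN) (lt_irrefl 1)
  | succ N ih =>
    rcases hN.eq_or_lt with rfl | hN
    · obtain ⟨T, hT, hfT⟩ := exists_bracket_X_one_eq hB hgen _ hf
      refine ⟨1, _, sub_ne_zero.2 ?_, T, hT, hfT⟩
      exact_mod_cast (PNat.coe_lt_coe 1 _).2 hp |>.ne'
    obtain ⟨j, c, hc, T, hT, hj⟩ := ih (PNat.lt_add_one_iff.1 hN)
    refine ⟨j + 1, c * (N : ℕ), mul_ne_zero hc (by simp),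
      c • (B (X 1) (pderiv p f) * X (N + 1)) + B (X 1) T, ?_, ?_⟩
    · have hle : supported k (Set.Iic (p + 1)) ≤ supported k (Set.Iic (N + 1)) :=
        supported_mono (Set.Iic_subset_Iic.2 (add_le_add_left (PNat.lt_add_one_iff.1 hN) 1))
      refine Subalgebra.add_mem _ (Subalgebra.smul_mem _ (Subalgebra.mul_mem _ ?_ ?_) _) ?_
      · exact hle (bracket_X_one_mem_supported hB hgen p (pderiv_mem_supported p hf))
      · exact X_mem_supported.2 (Set.mem_Iic.2 le_rfl)
      · exact bracket_X_one_mem_supported hB hgen N hT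
    · rw [Function.iterate_succ_apply', hj, ← hB.derivation_apply, map_add,
        Derivation.map_smul, Derivation.leibniz]
      simp only [hB.derivation_apply, bracket_X_one_X hgen, smul_eq_C_mul, smul_eq_mul, C_mul,
        PNat.add_coe, PNat.one_coe, Nat.cast_add, Nat.cast_one, add_sub_cancel_right]
      ring

lemma saturationModulo_eq_top {I : Ideal (MvPolynomial ℕ+ k)} (hI : IsPoissonIdeal B I)
    {p : ℕ+} (hp : 1 < p) {f : MvPolynomial ℕ+ k} (hfI : f ∈ I)
    (hf : f ∈ supported k (Set.Iic p)) :
    (supported k (Set.Iic p)).saturationModulo I (pderiv_mem_supported p hf) = ⊤ := by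
  set M := (supported k (Set.Iic p)).saturationModulo I (pderiv_mem_supported p hf)
  suffices hX : ∀ i, X i ∈ M by
    rw [eq_top_iff, ← adjoin_range_X, Algebra.adjoin_le_iff]
    rintro _ ⟨i, rfl⟩
    exact hX i
  intro i
  induction i using PNat.strongInductionOn with | _ i ih => ?_
  rcases le_or_gt i p with hip | hpi
  · exact Subalgebra.le_saturationModulo _ (X_mem_supported.2 hip)
  obtain ⟨N, rfl⟩ := PNat.exists_eq_succ_of_ne_one (hp.trans hpi).ne'
  obtain ⟨j, c, hc, T, hT, hj⟩ :=
    exists_iterate_bracket_X_one_eq hB hgen hp hf N (PNat.lt_add_one_iff.1 hpi)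
  have hTM : supported k (Set.Iic N) ≤ M := by
    rw [supported_eq_adjoin_X, Algebra.adjoin_le_iff]
    rintro _ ⟨l, hl, rfl⟩
    exact ih l (PNat.lt_add_one_iff.2 hl)
  exact Subalgebra.mem_saturationModulo_of_smul_mul_add_mem _ hc.isUnit (hTM hT)
    (hj ▸ hI.iterate_mem (X 1) hfI j)

lemma exists_finset_pderiv_mul_mem {Q : Ideal (MvPolynomial ℕ+ k)}
    (hQ : IsRadicalPoissonIdeal B Q) {p : ℕ+} (hp : 1 < p) {f : MvPolynomial ℕ+ k} (hfQ : f ∈ Q)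
    (hf : f ∈ supported k (Set.Iic p)) :
    ∃ C : Finset (MvPolynomial ℕ+ k), (C : Set (MvPolynomial ℕ+ k)) ⊆ Q ∧
      ∀ g ∈ Q, pderiv p f * g ∈ radicalPoissonSpan B C := by
  classical
  obtain ⟨C₀, hC₀Q, hC₀⟩ := exists_finset_spanning_inf_supported (Set.finite_Iic p) Q
  have hCQ : (↑(insert f C₀) : Set (MvPolynomial ℕ+ k)) ⊆ Q := by
    simpa [Set.insert_subset_iff] using ⟨hfQ, hC₀Q⟩
  refine ⟨insert f C₀, hCQ, fun g hg => ?_⟩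
  set J := radicalPoissonSpan B ↑(insert f C₀)
  have hJ : IsRadicalPoissonIdeal B J := isRadicalPoissonIdeal_radicalPoissonSpan _
  have hJQ : J ≤ Q := radicalPoissonSpan_le hQ hCQ
  have hfJ : f ∈ J := subset_radicalPoissonSpan _ (by simp)
  obtain ⟨n, r, hr, hgr⟩ := (Subalgebra.mem_saturationModulo _).1
    ((saturationModulo_eq_top hB hgen hJ.1 hp hfJ hf).ge (Algebra.mem_top (x := g)))
  have hrQ : r ∈ Q := by
    simpa using Q.sub_mem (Q.mul_mem_left (pderiv p f ^ n) hg) (hJQ hgr)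
  have hrJ : r ∈ J := by
    refine (Ideal.span_le.2 fun x hx => ?_) (hC₀ r hrQ hr)
    exact subset_radicalPoissonSpan _ (by simp [Finset.mem_coe.1 hx])
  have hgJ : pderiv p f ^ n * g ∈ J := by simpa using J.add_mem hgr hrJ
  refine hJ.2 ⟨n + 1, ?_⟩
  rw [show (pderiv p f * g) ^ (n + 1) = pderiv p f ^ n * g * (pderiv p f * g ^ n) by ring]
  exact J.mul_mem_right _ hgJ

theorem isRadicalPoissonFG_of_isRadicalPoissonIdeal {I : Ideal (MvPolynomial ℕ+ k)}
    (hI : IsRadicalPoissonIdeal B I) : IsRadicalPoissonFG B I := by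
  by_contra hfg
  obtain ⟨Q, hQ⟩ := exists_maximal_not_isRadicalPoissonFG hI hfg
  have hQprime : Q.IsPrime := hQ.isPrime_of_not_isRadicalPoissonFG hB.2.2.2.2
  have hQbot : Q ≠ ⊥ := fun h =>
    hQ.1.2 ⟨∅, le_antisymm (h ▸ bot_le) (radicalPoissonSpan_le hQ.1.1 (by simp))⟩
  obtain ⟨p, hp, f, hfQ, hf, hS⟩ :
      ∃ p : ℕ+, 1 < p ∧ ∃ f ∈ Q, f ∈ supported k (Set.Iic p) ∧ pderiv p f ∉ Q := by
    obtain ⟨p, f, hfQ, hf, hS⟩ := exists_pderiv_notMem hQbot hQprime.ne_top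
    rcases eq_or_ne p 1 with rfl | hp
    · refine ⟨3, by decide, X 3, X_three_mem hB hgen hQ.1.1.1 hQprime hfQ hf hS,
        X_mem_supported.2 (Set.mem_Iic.2 le_rfl), ?_⟩
      rw [pderiv_X_self]
      exact (Ideal.ne_top_iff_one Q).1 hQprime.ne_top
    · exact ⟨p, lt_of_le_of_ne one_le hp.symm, f, hfQ, hf, hS⟩
  obtain ⟨C, hCQ, hC⟩ := exists_finset_pderiv_mul_mem hB hgen hQ.1.1 hp hfQ hf
  exact hQ.1.2 (isRadicalPoissonFG_of_mul_mem hB.2.2.2.2 hQ.1.1 hCQ hC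
    (hQ.isRadicalPoissonFG_of_gt (isRadicalPoissonIdeal_radicalPoissonSpan _)
      (lt_radicalPoissonSpan_insert hQ.1.1 hS)))

end WittPlus

/-- Let `k` be a field of characteristic zero and let
`A = k[x₁, x₂, x₃, …]` be the polynomial algebra in variables `xᵢ = X i` indexed by the
positive integers, i.e. the symmetric algebra of the positive Witt algebra `W₊`, endowed with
its Poisson bracket determined by `{xᵢ, xⱼ} = (j - i)·x_{i+j}`.  Then `A` satisfies the ACC on
radical Poisson ideals. -/
theorem symmetricAlgebraWittPlus_poissonRadicalACC
    {k : Type*} [Field k] [CharZero k]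
    (B : MvPolynomial ℕ+ k → MvPolynomial ℕ+ k → MvPolynomial ℕ+ k)
    (hB : IsPoissonBracket k B)
    (hgen : ∀ i j : ℕ+,
      B (X i) (X j) = (((j : ℕ) : ℤ) - ((i : ℕ) : ℤ)) • (X (i + j) : MvPolynomial ℕ+ k)) :
    PoissonRadicalACC B :=
  poissonRadicalACC_of_forall_isRadicalPoissonFG fun _ =>
    isRadicalPoissonFG_of_isRadicalPoissonIdeal hB hgen
end

section
/- Let k be a field and let A be a commutative k-algebra that is an integral domain, equipped with a family (δ_j)_{j ∈ J} of k-linear derivations of A. Suppose there exist a finite-dimensional k-vector subspace V of A and a set S of ideals of A satisfying: (i) δ_j(I) ⊆ I for all j ∈ J and all I ∈ S; (ii) the intersection of all ideals in S is the zero ideal; and (iii) V ∩ I ≠ (0) for every I ∈ S. Then there exist a, b ∈ A with b ≠ 0 such that b·δ_j(a) = a·δ_j(b) for every j ∈ J and such that there is no c ∈ k with a = c·b (i.e. the element f = a/b of the fraction field Frac(A) satisfies δ_j(f) = 0 for all j, for the extensions of the δ_j to Frac(A), and f ∉ k). -/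
/-!
Suppose every common constant were a scalar. Let `e₁, …, e_d` be a `k`-basis of `V` and consider
the rows `(D e₁, …, D e_d) ∈ Aᵈ`, `D` running over the monoid generated by the `δⱼ`. A common
`A`-linear relation among these rows of minimal support can be normalised so that the ratios of
its coefficients are common constants, hence scalars, and it collapses to a `k`-linear relation
among the `eᵢ`. So there is none, and some `d` rows form a matrix `M` with `det M ≠ 0`. For
`I ∈ S` pick `0 ≠ v = ∑ cᵢ eᵢ ∈ I`: invariance gives `M c ∈ Iᵈ`, so `det M · c = adj M · M c ∈ Iᵈ`
and `det M ∈ I`. Hence `det M ∈ ⋂ S = 0`, a contradiction.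
-/

open Set Submodule Matrix

namespace Matrix

variable {A κ ι : Type*} [Fintype ι]

theorem det_mul_mem_of_mulVec_mem [DecidableEq ι] [CommRing A] (M : Matrix ι ι A) (I : Ideal A)
    {v : ι → A} (hv : ∀ z, (M *ᵥ v) z ∈ I) (i : ι) : M.det * v i ∈ I := by
  have h : (M.adjugate *ᵥ (M *ᵥ v)) i ∈ I :=
    I.sum_mem fun z _ => I.mul_mem_left _ (hv z)
  rwa [mulVec_mulVec, adjugate_mul, smul_mulVec, one_mulVec, Pi.smul_apply, smul_eq_mul] at h

theorem span_row_eq_top_of_mulVec_eq_zero {K : Type*} [Field K] (M : Matrix κ ι K)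
    (hM : ∀ v, M *ᵥ v = 0 → v = 0) : span K (range M.row) = ⊤ := by
  classical
  by_contra hne
  obtain ⟨φ, hφ0, hφ⟩ := (span K (range M.row)).exists_le_ker_of_lt_top (lt_top_iff_ne_top.2 hne)
  -- `φ` is the dot product with a vector orthogonal to every row
  have hrows : (M *ᵥ fun i => φ fun j => if i = j then 1 else 0) = 0 := funext fun r => by
    have hr : φ (M r) = 0 := hφ (subset_span ⟨r, rfl⟩)
    rwa [LinearMap.pi_apply_eq_sum_univ] at hr
  have hφi := congrFun (hM _ hrows)
  refine hφ0 (LinearMap.ext fun x => ?_)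
  rw [LinearMap.pi_apply_eq_sum_univ]
  exact Finset.sum_eq_zero fun i _ => by rw [hφi i, Pi.zero_apply, smul_zero]

theorem exists_det_submatrix_ne_zero_of_span_row_eq_top [DecidableEq ι] {K : Type*} [Field K]
    (M : Matrix κ ι K) (hM : span K (range M.row) = ⊤) :
    ∃ w : ι → κ, (M.submatrix w id).det ≠ 0 := by
  obtain ⟨κ', a, -, hspan, hli⟩ := exists_linearIndependent' K M.row
  let b := Module.Basis.mk hli (by rw [hspan, hM])
  let σ := b.indexEquiv (Pi.basisFun K ι)
  refine ⟨a ∘ σ.symm, ?_⟩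
  have hrows : LinearIndependent K (M.submatrix (a ∘ σ.symm) id) :=
    hli.comp σ.symm σ.symm.injective
  exact ((isUnit_iff_isUnit_det _).1 (linearIndependent_rows_iff_isUnit.1 hrows)).ne_zero

variable [CommRing A] [IsDomain A]

theorem eq_zero_of_map_mulVec_eq_zero (K : Type*) [Field K] [Algebra A K] [IsFractionRing A K]
    {M : Matrix κ ι A} (hM : ∀ v, M *ᵥ v = 0 → v = 0) {v : ι → K}
    (hv : M.map (algebraMap A K) *ᵥ v = 0) : v = 0 := by
  classical
  obtain ⟨b, hb⟩ := IsLocalization.exist_integer_multiples (nonZeroDivisors A) Finset.univ v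
  choose u hu using fun i => hb i (Finset.mem_univ i)
  have hbu : (algebraMap A K ∘ u) = (b : A) • v := funext hu
  have hu0 : M *ᵥ u = 0 := funext fun r => IsFractionRing.injective A K <| by
    rw [RingHom.map_mulVec, hbu, mulVec_smul, hv, smul_zero, Pi.zero_apply, Pi.zero_apply, map_zero]
  have hb0 : algebraMap A K b ≠ 0 :=
    IsFractionRing.to_map_ne_zero_of_mem_nonZeroDivisors b.2
  funext i
  have := congrFun hbu i
  rw [hM u hu0, Pi.smul_apply, Algebra.smul_def] at this
  simpa [hb0] using this.symm

theorem exists_det_submatrix_ne_zero [DecidableEq ι] (M : Matrix κ ι A)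
    (hM : ∀ v, M *ᵥ v = 0 → v = 0) : ∃ w : ι → κ, (M.submatrix w id).det ≠ 0 := by
  let K := FractionRing A
  obtain ⟨w, hw⟩ := (M.map (algebraMap A K)).exists_det_submatrix_ne_zero_of_span_row_eq_top
    (span_row_eq_top_of_mulVec_eq_zero _ fun v => eq_zero_of_map_mulVec_eq_zero K hM)
  refine ⟨w, fun h => hw ?_⟩
  rw [submatrix_map]
  simpa [h] using (RingHom.map_det (algebraMap A K) (M.submatrix w id)).symm

end Matrix

theorem Submodule.exists_mem_mul_map_eq_of_ne_bot {A ι J F : Type*} [CommRing A] [Finite ι]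
    [FunLike F A A] [ZeroHomClass F A A] (δ : J → F) (N : Submodule A (ι → A))
    (hN : ∀ j, ∀ l ∈ N, (fun i => δ j (l i)) ∈ N) (hN0 : N ≠ ⊥) :
    ∃ l ∈ N, ∃ i₀, l i₀ ≠ 0 ∧ ∀ j i, l i₀ * δ j (l i) = l i * δ j (l i₀) := by
  obtain ⟨l, ⟨hlN, hl0⟩, hmin⟩ := (measure fun l : ι → A => (Function.support l).ncard).wf.has_min
    {l | l ∈ N ∧ l ≠ 0} ((Submodule.ne_bot_iff N).1 hN0)
  obtain ⟨i₀, hi₀⟩ := Function.ne_iff.1 hl0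
  refine ⟨l, hlN, i₀, hi₀, fun j i => ?_⟩
  -- this combination lies in `N` and has smaller support than `l`, so it vanishes
  set m : ι → A := l i₀ • (fun i => δ j (l i)) - δ j (l i₀) • l
  have hmN : m ∈ N := N.sub_mem (N.smul_mem _ (hN j l hlN)) (N.smul_mem _ hlN)
  have hsupp : Function.support m ⊂ Function.support l := by
    refine Set.ssubset_iff_of_subset (fun i hi => ?_) |>.2 ⟨i₀, hi₀, ?_⟩
    · contrapose! hi
      simp [m, Function.notMem_support.1 hi]
    · simp [m, mul_comm]
  have hm0 : m = 0 := by
    by_contra hm0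
    exact hmin m ⟨hmN, hm0⟩ (Set.ncard_lt_ncard hsupp)
  simpa [m, sub_eq_zero, mul_comm] using congrFun hm0 i

section DifferentialOperators

variable {k A J ι : Type*} [Field k] [CommRing A] [Algebra k A] (δ : J → A →ₗ[k] A)

def diffOpMatrix (e : ι → A) : Matrix (Submonoid.closure (range δ)) ι A :=
  Matrix.of fun f i => (f : A →ₗ[k] A) (e i)

variable {δ}

theorem mapsTo_of_mem_closure_range {s : Set A} (hs : ∀ j, MapsTo (δ j) s s) {f : A →ₗ[k] A}
    (hf : f ∈ Submonoid.closure (range δ)) : MapsTo f s s := by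
  induction hf using Submonoid.closure_induction with
  | mem f hf => obtain ⟨j, rfl⟩ := hf; exact hs j
  | one => exact mapsTo_id s
  | mul f g _ _ hf hg => exact hf.comp hg

variable [Fintype ι] {e : ι → A}

theorem diffOpMatrix_mulVec_algebraMap (c : ι → k) (f : Submonoid.closure (range δ)) :
    (diffOpMatrix δ e *ᵥ fun i => algebraMap k A (c i)) f = (f : A →ₗ[k] A) (∑ i, c i • e i) := by
  simp only [diffOpMatrix, mulVec, dotProduct, of_apply, map_sum, map_smul]
  simp only [Algebra.smul_def, mul_comm]

theorem diffOpMatrix_mulVec_map_eq_zero {j : J}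
    (hj : ∀ x y, δ j (x * y) = δ j x * y + x * δ j y) {l : ι → A}
    (hl : diffOpMatrix δ e *ᵥ l = 0) : (diffOpMatrix δ e *ᵥ fun i => δ j (l i)) = 0 := by
  funext f
  have hδf : δ j * (f : A →ₗ[k] A) ∈ Submonoid.closure (range δ) :=
    mul_mem (Submonoid.subset_closure ⟨j, rfl⟩) f.2
  have h0 : ∑ i, δ j ((f : A →ₗ[k] A) (e i)) * l i = 0 := congrFun hl ⟨_, hδf⟩
  have h := congrArg (δ j) (congrFun hl f)
  simp only [mulVec, dotProduct, diffOpMatrix, of_apply, Pi.zero_apply, map_zero, map_sum,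
    hj, Finset.sum_add_distrib, h0, zero_add] at h ⊢
  exact h

theorem diffOpMatrix_mulVec_eq_zero [IsDomain A] (he : LinearIndependent k e)
    (hδ : ∀ j x y, δ j (x * y) = δ j x * y + x * δ j y)
    (hconst : ∀ a b : A, b ≠ 0 → (∀ j, b * δ j a = a * δ j b) → ∃ c : k, a = c • b)
    (v : ι → A) (hv : diffOpMatrix δ e *ᵥ v = 0) : v = 0 := by
  by_contra hv0
  obtain ⟨l, hlN, i₀, hi₀, hratio⟩ :=
    (LinearMap.ker (diffOpMatrix δ e).mulVecLin).exists_mem_mul_map_eq_of_ne_bot δ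
      (fun j _ hl => diffOpMatrix_mulVec_map_eq_zero (hδ j) hl)
      (fun h => hv0 (ker_mulVecLin_eq_bot_iff.1 h v hv))
  choose c hc using fun i => hconst (l i) (l i₀) hi₀ (hratio · i)
  have hrel : l i₀ * ∑ i, c i • e i = 0 := by
    have h1 : ∑ i, e i * l i = 0 := congrFun (LinearMap.mem_ker.1 hlN) ⟨1, one_mem _⟩
    rw [Finset.mul_sum, ← h1]
    refine Finset.sum_congr rfl fun i _ => ?_
    rw [hc i, Algebra.smul_def, Algebra.smul_def]
    ring
  have hc0 := Fintype.linearIndependent_iff.1 he c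
    ((mul_eq_zero.1 hrel).resolve_left hi₀)
  exact hi₀ (by rw [hc i₀, hc0, zero_smul])

theorem det_diffOpMatrix_submatrix_mem [DecidableEq ι] (w : ι → Submonoid.closure (range δ))
    {I : Ideal A} (hI : ∀ j, MapsTo (δ j) I I) {v : A} (hvI : v ∈ I) (hv0 : v ≠ 0)
    (hv : v ∈ span k (range e)) : ((diffOpMatrix δ e).submatrix w id).det ∈ I := by
  obtain ⟨c, rfl⟩ := (mem_span_range_iff_exists_fun k).1 hv
  obtain ⟨i, hci⟩ : ∃ i, c i ≠ 0 := by
    contrapose! hv0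
    simp [hv0]
  have h := ((diffOpMatrix δ e).submatrix w id).det_mul_mem_of_mulVec_mem I
    (v := fun i => algebraMap k A (c i)) (fun z => ?_) i
  · exact (Ideal.mul_unit_mem_iff_mem I ((Ne.isUnit hci).map _)).1 h
  · change (diffOpMatrix δ e *ᵥ _) (w z) ∈ I
    rw [diffOpMatrix_mulVec_algebraMap]
    exact mapsTo_of_mem_closure_range hI (w z).2 hvI

end DifferentialOperators

/-- Let `A` be a commutative `k`-algebra that is an integral domain,
equipped with a family `(δ j)_{j ∈ J}` of `k`-linear derivations.  Suppose there are a
finite-dimensional `k`-subspace `V` of `A` and a set `S` of ideals of `A` such that every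
ideal in `S` is invariant under all the `δ j`, the intersection of the ideals in `S` is zero,
and every ideal in `S` meets `V` nontrivially.  Then there are `a, b ∈ A`, `b ≠ 0`, with
`b·δⱼ(a) = a·δⱼ(b)` for all `j` and `a` not a `k`-multiple of `b`; that is, the element
`f = a/b` of `Frac(A)` is a nonconstant common constant of the derivations. -/
theorem exists_nonconstant_constant_of_derivations
    {k A : Type*} [Field k] [CommRing A] [IsDomain A] [Algebra k A]
    {J : Type*} (δ : J → (A →ₗ[k] A))
    (hder : ∀ j : J, ∀ x y : A, δ j (x * y) = δ j x * y + x * δ j y)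
    (V : Submodule k A) (hV : FiniteDimensional k V)
    (S : Set (Ideal A))
    (hinv : ∀ j : J, ∀ I ∈ S, ∀ x ∈ I, δ j x ∈ I)
    (hzero : sInf S = ⊥)
    (hmeet : ∀ I ∈ S, ∃ v : A, v ∈ V ∧ v ∈ I ∧ v ≠ 0) :
    ∃ a b : A, b ≠ 0 ∧ (∀ j : J, b * δ j a = a * δ j b) ∧ ¬ ∃ c : k, a = c • b := by
  by_contra! hconst
  let b := Module.finBasis k V
  let e : Fin (Module.finrank k V) → A := V.subtype ∘ b
  have he : LinearIndependent k e := b.linearIndependent.map' V.subtype V.ker_subtype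
  have hspan : span k (range e) = V := by
    rw [range_comp, span_image, b.span_eq, map_subtype_top]
  obtain ⟨w, hw⟩ := (diffOpMatrix δ e).exists_det_submatrix_ne_zero
    (diffOpMatrix_mulVec_eq_zero he hder hconst)
  refine hw (Ideal.mem_bot.1 (hzero ▸ Ideal.mem_sInf.2 fun {I} hI => ?_))
  obtain ⟨v, hvV, hvI, hv0⟩ := hmeet I hI
  exact det_diffOpMatrix_submatrix_mem w (fun j => hinv j I hI) hvI hv0 (hspan.symm ▸ hvV)
end
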